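/- arXiv:1401.3811 — 6 statements merged into one kernel-verified Lean document; each statement's English description precedes it below -/
import Mathlib

section
/- If a chord diagram contains an incoherent bigon, then its reductivity is at most 1. (Paper's Lemma 2.1: if a spherical curve P has an incoherent bigon, then r(P) ≤ 1.) -/
/-!
Chord diagrams modeling spherical curves (Gauss diagrams).

A chord diagram with `n` chords is a fixed-point-free involution `f` on the
cyclically ordered set `ZMod (2*n)`; the unordered pairs `{a, f a}` are its chords.
-/

namespace SphericalCurveReductivity

/-- `x` lies in the open arc from `a` to `b` (in the positive cyclic direction). -/
def InArc {N : ℕ} (a b x : ZMod N) : Prop :=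
  0 < (x - a).val ∧ (x - a).val < (b - a).val

/-- The chord `{a, f a}` crosses the chord `{c, f c}`: the four endpoints are pairwise
distinct and exactly one of `c`, `f c` lies in the open arc from `a` to `f a`. -/
def Crosses {N : ℕ} (f : ZMod N → ZMod N) (a c : ZMod N) : Prop :=
  c ≠ a ∧ c ≠ f a ∧ f c ≠ a ∧ f c ≠ f a ∧
    Xor' (InArc a (f a) c) (InArc a (f a) (f c))

/-- A chord diagram is reducible if some chord crosses no other chord. -/
def Reducible {N : ℕ} (f : ZMod N → ZMod N) : Prop :=
  ∃ a, ∀ c, ¬ Crosses f a c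

/-- The embedding of the points of the new chord diagram (after the I-move at the
chord `{a, b}`) into the old one: the points `a`, `b` are deleted and the points of
the open arc from `a` to `b` appear in reversed order, followed by the points of the
open arc from `b` to `a` in their original order. -/
def imoveEmb (n : ℕ) (a b : ZMod (2 * n)) (k : ZMod (2 * (n - 1))) : ZMod (2 * n) :=
  if k.val + 1 < (b - a).val then a + (((b - a).val - 1 - k.val : ℕ) : ZMod (2 * n))
  else a + ((k.val + 2 : ℕ) : ZMod (2 * n))

/-- The induced map of points of the old chord diagram (other than `a`, `b`) to points
of the new chord diagram after the I-move at the chord `{a, b}`; inverse to `imoveEmb`. -/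
def imoveProj (n : ℕ) (a b : ZMod (2 * n)) (x : ZMod (2 * n)) : ZMod (2 * (n - 1)) :=
  if (x - a).val < (b - a).val then (((b - a).val - 1 - (x - a).val : ℕ) : ZMod (2 * (n - 1)))
  else (((x - a).val - 2 : ℕ) : ZMod (2 * (n - 1)))

/-- The I-move (inverse-half-twisted splice) at the chord `{a, f a}`: delete the two
points `a`, `f a` and reverse the order of the points along the open arc from `a`
to `f a`, producing a chord diagram with `n - 1` chords. -/
def IMove {n : ℕ} (f : ZMod (2 * n) → ZMod (2 * n)) (a : ZMod (2 * n))
    (k : ZMod (2 * (n - 1))) : ZMod (2 * (n - 1)) :=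
  imoveProj n a (f a) (f (imoveEmb n a (f a) k))

/-- `ReductivityLe m f` : the reductivity of the chord diagram `f` is at most `m`,
i.e. at most `m` successive I-moves transform `f` into a reducible chord diagram. -/
def ReductivityLe : ℕ → ∀ {n : ℕ}, (ZMod (2 * n) → ZMod (2 * n)) → Prop
  | 0, _, f => Reducible f
  | m + 1, n, f => Reducible f ∨ ∃ a : ZMod (2 * n), ReductivityLe m (IMove f a)

/-- An incoherent bigon: the two chords `{i, j}` and `{i+1, j+1}` with the four
endpoints pairwise distinct. -/
def IncoherentBigon {N : ℕ} (f : ZMod N → ZMod N) (i j : ZMod N) : Prop :=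
  f i = j ∧ f (i + 1) = j + 1 ∧ ({i, j, i + 1, j + 1} : Finset (ZMod N)).card = 4

/-- A coherent bigon: the two chords `{i, j+1}` and `{i+1, j}` with the four
endpoints pairwise distinct. -/
def CoherentBigon {N : ℕ} (f : ZMod N → ZMod N) (i j : ZMod N) : Prop :=
  f i = j + 1 ∧ f (i + 1) = j ∧ ({i, j, i + 1, j + 1} : Finset (ZMod N)).card = 4

/-- The six endpoints of a trigon with corners at the consecutive pairs
`(i, i+1)`, `(j, j+1)`, `(k, k+1)`. -/
def trigonSet {N : ℕ} (i j k : ZMod N) : Finset (ZMod N) :=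
  {i, i + 1, j, j + 1, k, k + 1}

/-- A trigon: three chords whose six endpoints form the three pairs of cyclically
consecutive points `(i, i+1)`, `(j, j+1)`, `(k, k+1)` (pairwise distinct), such that no
chord joins the two points of one of these pairs, so that the three chords connect the
three consecutive pairs in a triangle. -/
def Trigon {N : ℕ} (f : ZMod N → ZMod N) (i j k : ZMod N) : Prop :=
  (trigonSet i j k).card = 6 ∧
  (∀ x ∈ trigonSet i j k, f x ∈ trigonSet i j k) ∧
  f i ≠ i + 1 ∧ f j ≠ j + 1 ∧ f k ≠ k + 1

/-- A representative point of the third chord of a trigon (the chord not containing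
`i` nor `i + 1`). -/
def trigonThird {N : ℕ} (f : ZMod N → ZMod N) (i j : ZMod N) : ZMod N :=
  if j = f i ∨ j = f (i + 1) then j + 1 else j

/-- Exactly two of three propositions hold. -/
def ExactlyTwo (p q r : Prop) : Prop :=
  (p ∧ q ∧ ¬r) ∨ (p ∧ ¬q ∧ r) ∨ (¬p ∧ q ∧ r)

/-- Exactly one of three propositions holds. -/
def ExactlyOne (p q r : Prop) : Prop :=
  (p ∧ ¬q ∧ ¬r) ∨ (¬p ∧ q ∧ ¬r) ∨ (¬p ∧ ¬q ∧ r)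

/-- Trigon of type A: exactly two of the three pairs of its chords cross. -/
def TrigonA {N : ℕ} (f : ZMod N → ZMod N) (i j k : ZMod N) : Prop :=
  Trigon f i j k ∧
    ExactlyTwo (Crosses f i (i + 1)) (Crosses f i (trigonThird f i j))
      (Crosses f (i + 1) (trigonThird f i j))

/-- Trigon of type B: exactly one pair of its chords crosses. -/
def TrigonB {N : ℕ} (f : ZMod N → ZMod N) (i j k : ZMod N) : Prop :=
  Trigon f i j k ∧
    ExactlyOne (Crosses f i (i + 1)) (Crosses f i (trigonThird f i j))
      (Crosses f (i + 1) (trigonThird f i j))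

/-- Trigon of type C: its three chords pairwise cross. -/
def TrigonC {N : ℕ} (f : ZMod N → ZMod N) (i j k : ZMod N) : Prop :=
  Trigon f i j k ∧
    Crosses f i (i + 1) ∧ Crosses f i (trigonThird f i j) ∧
      Crosses f (i + 1) (trigonThird f i j)

/-- Trigon of type D: no two of its chords cross. -/
def TrigonD {N : ℕ} (f : ZMod N → ZMod N) (i j k : ZMod N) : Prop :=
  Trigon f i j k ∧
    ¬ Crosses f i (i + 1) ∧ ¬ Crosses f i (trigonThird f i j) ∧
      ¬ Crosses f (i + 1) (trigonThird f i j)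

/-- If a chord diagram contains an incoherent bigon, then its reductivity is at most 1
(Lemma 2.1). -/
theorem incoherentBigon_reductivity_le_one {n : ℕ} (hn : 1 ≤ n)
    (f : ZMod (2 * n) → ZMod (2 * n)) (hinv : Function.Involutive f)
    (hfree : ∀ a, f a ≠ a) (i j : ZMod (2 * n)) (hb : IncoherentBigon f i j) :
    ReductivityLe 1 f := by
  obtain ⟨hfi, hfi1, hcard⟩ := hb
  haveI hNZ : NeZero (2 * n) := ⟨by omega⟩
  have hN : 4 ≤ 2 * n := by
    have h := Finset.card_le_univ ({i, j, i + 1, j + 1} : Finset (ZMod (2 * n)))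
    rw [hcard, ZMod.card] at h
    exact h
  have h3 : ∀ a c d : ZMod (2 * n), ({a, c, d} : Finset (ZMod (2 * n))).card ≤ 3 := by
    intro a c d
    refine le_trans (Finset.card_insert_le _ _) ?_
    have h1 := Finset.card_insert_le c ({d} : Finset (ZMod (2 * n)))
    simp only [Finset.card_singleton] at h1
    omega
  have hcard' : ∀ a c d : ZMod (2 * n),
      ({i, j, i + 1, j + 1} : Finset (ZMod (2 * n))) ⊆ {a, c, d} → False := by
    intro a c d hsub
    have h4 := Finset.card_le_card hsub
    rw [hcard] at h4
    have := h3 a c d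
    omega
  have hji : j ≠ i := by
    intro h
    refine hcard' j (i + 1) (j + 1) ?_
    intro x hx
    simp only [Finset.mem_insert, Finset.mem_singleton, h] at hx ⊢
    tauto
  have hji1 : j ≠ i + 1 := by
    intro h
    refine hcard' i j (j + 1) ?_
    intro x hx
    simp only [Finset.mem_insert, Finset.mem_singleton, h] at hx ⊢
    tauto
  have hj1i : j + 1 ≠ i := by
    intro h
    refine hcard' i j (i + 1) ?_
    intro x hx
    simp only [Finset.mem_insert, Finset.mem_singleton, ← h] at hx ⊢
    tauto
  haveI hNZ' : NeZero (2 * (n - 1)) := ⟨by omega⟩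
  set d := (j - i).val with hd
  have hdlt : d < 2 * n := ZMod.val_lt _
  have hd0 : d ≠ 0 := by
    intro h
    apply hji
    have hz : j - i = 0 := (ZMod.val_eq_zero _).mp (by rw [← hd]; exact h)
    exact sub_eq_zero.mp hz
  have hd1 : d ≠ 1 := by
    intro h
    apply hji1
    have heq : j - i = ((1 : ℕ) : ZMod (2 * n)) := by
      apply ZMod.val_injective
      rw [ZMod.val_cast_of_lt (by omega), ← hd, h]
    rw [Nat.cast_one] at heq
    rw [sub_eq_iff_eq_add.mp heq, add_comm]
  have hdtop : d ≠ 2 * n - 1 := by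
    intro h
    apply hj1i
    have heq : j - i = ((2 * n - 1 : ℕ) : ZMod (2 * n)) := by
      apply ZMod.val_injective
      rw [ZMod.val_cast_of_lt (by omega), ← hd, h]
    have hneg : ((2 * n - 1 : ℕ) : ZMod (2 * n)) = -1 := by
      rw [Nat.cast_sub (by omega), Nat.cast_one, ZMod.natCast_self, zero_sub]
    rw [hneg] at heq
    linear_combination heq
  set k : ZMod (2 * (n - 1)) := ((d - 2 : ℕ) : ZMod (2 * (n - 1))) with hkdef
  have hk : k.val = d - 2 := ZMod.val_cast_of_lt (by omega)
  have hemb : imoveEmb n i j k = i + 1 := by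
    simp only [imoveEmb, ← hd, hk]
    rw [if_pos (by omega), show d - 1 - (d - 2) = 1 from by omega, Nat.cast_one]
  have hv1 : (1 : ZMod (2 * n)).val = 1 := ZMod.val_one'' (by omega)
  have he : (j + 1 - i).val = d + 1 := by
    have h1 : j + 1 - i = (j - i) + 1 := by ring
    rw [h1, ZMod.val_add_of_lt (by rw [← hd, hv1]; omega), ← hd, hv1]
  have hkey : IMove f i k = k + 1 := by
    unfold IMove
    rw [hfi, hemb, hfi1]
    simp only [imoveProj, he]
    rw [if_neg (by omega), show d + 1 - 2 = (d - 2) + 1 from by omega, Nat.cast_add,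
      Nat.cast_one, ← hkdef]
  refine Or.inr ⟨i, ?_⟩
  show Reducible (IMove f i)
  refine ⟨k, fun c hc => ?_⟩
  obtain ⟨-, -, -, -, hx⟩ := hc
  have hv1' : (1 : ZMod (2 * (n - 1))).val = 1 := ZMod.val_one'' (by omega)
  rw [hkey] at hx
  rcases hx with ⟨⟨_, h2⟩, -⟩ | ⟨⟨_, h2⟩, -⟩ <;>
    rw [add_sub_cancel_left, hv1'] at h2 <;> omega

end SphericalCurveReductivity
end

section
/- If chords s and t of a chord diagram form an incoherent bigon, then the I-move at s produces a reducible chord diagram; more precisely, after the I-move at s the chord coming from t crosses no other chord. -/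
/-!
Chord diagrams modeling spherical curves (Gauss diagrams).

A chord diagram with `n` chords is a fixed-point-free involution `f` on the
cyclically ordered set `ZMod (2*n)`; the unordered pairs `{a, f a}` are its chords.
-/

namespace SphericalCurveReductivity

/-- A chord joining adjacent points crosses nothing. -/
lemma adjacent_not_crosses {M : ℕ} [Fact (1 < M)] (g : ZMod M → ZMod M) (a : ZMod M)
    (hga : g a = a + 1) (c : ZMod M) : ¬ Crosses g a c := by
  rintro ⟨-, -, -, -, hx⟩
  have h1 : (g a - a).val = 1 := by rw [hga, add_sub_cancel_left, ZMod.val_one]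
  rcases hx with ⟨⟨h2, h3⟩, -⟩ | ⟨⟨h2, h3⟩, -⟩ <;> rw [h1] at h3 <;> omega

/-- If the chords `{i, j}` and `{i+1, j+1}` form an incoherent bigon, then the I-move at
the chord `{i, j}` produces a reducible chord diagram; more precisely, the chord coming
from `{i+1, j+1}` crosses no other chord in the new diagram. -/
theorem imove_at_incoherentBigon_reducible {n : ℕ} (hn : 1 ≤ n)
    (f : ZMod (2 * n) → ZMod (2 * n)) (hinv : Function.Involutive f)
    (hfree : ∀ a, f a ≠ a) (i j : ZMod (2 * n)) (hb : IncoherentBigon f i j) :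
    (∀ c, ¬ Crosses (IMove f i) (imoveProj n i (f i) (i + 1)) c) ∧
      Reducible (IMove f i) := by
  haveI : NeZero (2 * n) := ⟨by omega⟩
  obtain ⟨hfi, hfi1, hcard⟩ := hb
  have hN4 : 4 ≤ 2 * n := by
    have h := Finset.card_le_univ ({i, j, i + 1, j + 1} : Finset (ZMod (2 * n)))
    rw [hcard] at h
    simpa [ZMod.card] using h
  haveI : NeZero (2 * (n - 1)) := ⟨by omega⟩
  haveI : Fact (1 < 2 * n) := ⟨by omega⟩
  haveI : Fact (1 < 2 * (n - 1)) := ⟨by omega⟩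
  have hdlt : (j - i).val < 2 * n := ZMod.val_lt _
  have hji1 : j ≠ i + 1 := by
    intro h
    rw [h] at hcard
    rw [Finset.insert_idem] at hcard
    have h1 := Finset.card_insert_le i ({i+1, i+1+1} : Finset (ZMod (2 * n)))
    have h2 := Finset.card_insert_le (i+1) ({i+1+1} : Finset (ZMod (2 * n)))
    rw [hcard] at h1
    rw [Finset.card_singleton] at h2
    omega
  have hj1i : j + 1 ≠ i := by
    intro h
    rw [← h] at hcard
    have hcoll : ({j+1, j, j+1+1, j+1} : Finset (ZMod (2 * n))) = {j, j+1+1, j+1} :=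
      Finset.insert_eq_self.mpr (by simp)
    rw [hcoll] at hcard
    have h1 := Finset.card_insert_le j ({j+1+1, j+1} : Finset (ZMod (2 * n)))
    have h2 := Finset.card_insert_le (j+1+1) ({j+1} : Finset (ZMod (2 * n)))
    rw [hcard] at h1
    rw [Finset.card_singleton] at h2
    omega
  have hd0 : (j - i).val ≠ 0 := by
    intro h
    have h2 : j - i = 0 := ZMod.val_injective _ (by rw [ZMod.val_zero]; exact h)
    rw [sub_eq_zero] at h2
    exact hfree i (hfi.trans h2)
  have hd1 : (j - i).val ≠ 1 := by
    intro h
    apply hji1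
    have h2 : j - i = 1 := ZMod.val_injective _ (by rw [ZMod.val_one]; exact h)
    rw [sub_eq_iff_eq_add] at h2
    rw [h2, add_comm]
  have hdN1 : (j - i).val ≠ 2 * n - 1 := by
    intro h
    apply hj1i
    have h2 : j - i = ((2 * n - 1 : ℕ) : ZMod (2 * n)) :=
      ZMod.val_injective _ (by rw [ZMod.val_cast_of_lt (by omega)]; exact h)
    have hN1 : ((2 * n - 1 : ℕ) : ZMod (2 * n)) = -1 := by
      have h3 : ((2 * n - 1 : ℕ) : ZMod (2 * n)) + 1 = 0 := by
        have h4 : ((2 * n - 1 : ℕ) : ZMod (2 * n)) + ((1 : ℕ) : ZMod (2 * n))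
            = ((2 * n : ℕ) : ZMod (2 * n)) := by
          rw [← Nat.cast_add]; congr 1; omega
        simpa [ZMod.natCast_self] using h4
      linear_combination h3
    rw [hN1] at h2
    linear_combination h2
  have hd2 : 2 ≤ (j - i).val := by omega
  have hdN2 : (j - i).val ≤ 2 * n - 2 := by omega
  have hvi1 : (i + 1 - i).val = 1 := by rw [add_sub_cancel_left, ZMod.val_one]
  have hvj1 : (j + 1 - i).val = (j - i).val + 1 := by
    have h : j + 1 - i = (((j - i).val + 1 : ℕ) : ZMod (2 * n)) := by
      rw [Nat.cast_add, Nat.cast_one, ZMod.natCast_zmod_val]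
      ring
    rw [h, ZMod.val_cast_of_lt (by omega)]
  have hproj1 : imoveProj n i (f i) (i + 1)
      = (((j - i).val - 2 : ℕ) : ZMod (2 * (n - 1))) := by
    rw [imoveProj, hfi, if_pos (by rw [hvi1]; omega), hvi1]
    congr 1
  have hvala : ((((j - i).val - 2 : ℕ) : ZMod (2 * (n - 1)))).val = (j - i).val - 2 :=
    ZMod.val_cast_of_lt (by omega)
  have hemb : imoveEmb n i (f i) (((j - i).val - 2 : ℕ) : ZMod (2 * (n - 1))) = i + 1 := by
    rw [imoveEmb, hfi, hvala, if_pos (by omega)]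
    have h : ((j - i).val - 1 - ((j - i).val - 2) : ℕ) = 1 := by omega
    rw [h, Nat.cast_one]
  have hproj2 : imoveProj n i (f i) (j + 1)
      = (((j - i).val - 1 : ℕ) : ZMod (2 * (n - 1))) := by
    rw [imoveProj, hfi, if_neg (by rw [hvj1]; omega), hvj1]
    congr 1
  have hkey : IMove f i (imoveProj n i (f i) (i + 1)) =
      imoveProj n i (f i) (i + 1) + 1 := by
    rw [hproj1, IMove, hemb, hfi1, hproj2]
    have h : ((j - i).val - 1 : ℕ) = ((j - i).val - 2) + 1 := by omega
    rw [h, Nat.cast_add, Nat.cast_one]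
  exact ⟨fun c => adjacent_not_crosses _ _ hkey c,
    ⟨_, fun c => adjacent_not_crosses _ _ hkey c⟩⟩

end SphericalCurveReductivity
end

section
/- If a chord diagram contains a coherent bigon, then its reductivity is at most 2. (Paper's Lemma 2.2: if a spherical curve P has a coherent bigon, then r(P) ≤ 2.) -/
/-!
Chord diagrams modeling spherical curves (Gauss diagrams).

A chord diagram with `n` chords is a fixed-point-free involution `f` on the
cyclically ordered set `ZMod (2*n)`; the unordered pairs `{a, f a}` are its chords.
-/

namespace SphericalCurveReductivity

set_option linter.unusedSectionVars false



section Helpers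
variable {K : ℕ} [NeZero K]

lemma val_sub_le {x y : ZMod K} (h : y.val ≤ x.val) : (x - y).val = x.val - y.val :=
  ZMod.val_sub h

lemma val_sub_lt {x y : ZMod K} (h : x.val < y.val) : (x - y).val = K + x.val - y.val := by
  have hy : y ≠ 0 := by
    intro h0; rw [h0] at h; simp [ZMod.val_zero] at h
  haveI : NeZero y := ⟨hy⟩
  have hyv : 0 < y.val := by
    rcases Nat.eq_zero_or_pos y.val with h0 | h0
    · exact absurd ((ZMod.val_eq_zero y).1 h0) hy
    · exact h0
  have hneg : (-y).val = K - y.val := ZMod.val_neg_of_ne_zero y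
  have hx := ZMod.val_lt x
  have hy2 := ZMod.val_lt y
  rw [sub_eq_add_neg, ZMod.val_add_of_lt (by rw [hneg]; omega), hneg]
  omega

lemma cast_val_self (x : ZMod K) : ((x.val : ℕ) : ZMod K) = x :=
  ZMod.natCast_rightInverse x

lemma add_cast_offset (a x : ZMod K) : a + (((x - a).val : ℕ) : ZMod K) = x := by
  rw [cast_val_self]; ring

lemma sub_val_formula (b x y : ZMod K) :
    (x - y).val = if (y - b).val ≤ (x - b).val then (x - b).val - (y - b).val
      else K + (x - b).val - (y - b).val := by
  have hxy : x - y = (x - b) - (y - b) := by ring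
  rw [hxy]
  split_ifs with h
  · exact val_sub_le h
  · exact val_sub_lt (by omega)

lemma val_one' (hK : 2 ≤ K) : (1 : ZMod K).val = 1 := by
  rw [ZMod.val_one_eq_one_mod]; exact Nat.mod_eq_of_lt (by omega)

omit [NeZero K] in
lemma cast_add_one (w : ℕ) : ((w : ℕ) : ZMod K) + 1 = (((w + 1 : ℕ)) : ZMod K) := by
  push_cast; ring

lemma eq_of_val_eq {x y : ZMod K} (h : x.val = y.val) : x = y :=
  ZMod.val_injective K h

end Helpers


section Eval

lemma proj_eval_lo {n : ℕ} (a b x : ZMod (2 * n)) (h : (x - a).val < (b - a).val) :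
    imoveProj n a b x = (((b - a).val - 1 - (x - a).val : ℕ) : ZMod (2 * (n - 1))) := by
  rw [imoveProj, if_pos h]

lemma proj_eval_hi {n : ℕ} (a b x : ZMod (2 * n)) (h : ¬ ((x - a).val < (b - a).val)) :
    imoveProj n a b x = (((x - a).val - 2 : ℕ) : ZMod (2 * (n - 1))) := by
  rw [imoveProj, if_neg h]

lemma imove_eval_lo {n : ℕ} [NeZero (2 * (n - 1))] (f : ZMod (2 * n) → ZMod (2 * n))
    (a : ZMod (2 * n)) (v : ℕ) (hv : v < 2 * (n - 1)) (hbr : v + 1 < (f a - a).val) :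
    IMove f a ((v : ℕ) : ZMod (2 * (n - 1))) =
      imoveProj n a (f a) (f (a + (((f a - a).val - 1 - v : ℕ) : ZMod (2 * n)))) := by
  rw [IMove, imoveEmb, ZMod.val_cast_of_lt hv, if_pos hbr]

lemma imove_eval_hi {n : ℕ} [NeZero (2 * (n - 1))] (f : ZMod (2 * n) → ZMod (2 * n))
    (a : ZMod (2 * n)) (v : ℕ) (hv : v < 2 * (n - 1)) (hbr : ¬ (v + 1 < (f a - a).val)) :
    IMove f a ((v : ℕ) : ZMod (2 * (n - 1))) =
      imoveProj n a (f a) (f (a + ((v + 2 : ℕ) : ZMod (2 * n)))) := by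
  rw [IMove, imoveEmb, ZMod.val_cast_of_lt hv, if_neg hbr]

lemma reducible_of_monogon {K : ℕ} (hK : 2 ≤ K) (f : ZMod K → ZMod K) (a : ZMod K)
    (h : f a = a + 1) : Reducible f := by
  haveI : NeZero K := ⟨by omega⟩
  refine ⟨a, fun c hc => ?_⟩
  obtain ⟨-, -, -, -, hx⟩ := hc
  rw [h] at hx
  have harc : ∀ x : ZMod K, ¬ InArc a (a + 1) x := by
    intro x hx'
    obtain ⟨h1, h2⟩ := hx'
    rw [show a + 1 - a = 1 by ring, val_one' hK] at h2
    omega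
  rcases hx with ⟨h1, -⟩ | ⟨h1, -⟩ <;> exact harc _ h1

lemma imove_incoherent {m : ℕ} (hm : 2 ≤ m) (f : ZMod (2 * m) → ZMod (2 * m))
    (t s : ZMod (2 * m)) (h1 : f t = s) (h2 : f (t + 1) = s + 1)
    (hlo : 2 ≤ (s - t).val) (hhi : (s - t).val ≤ 2 * m - 2) :
    ∃ a : ZMod (2 * (m - 1)), IMove f t a = a + 1 := by
  haveI : NeZero (2 * m) := ⟨by omega⟩
  haveI : NeZero (2 * (m - 1)) := ⟨by omega⟩
  set d := (s - t).val with hd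
  refine ⟨((d - 2 : ℕ) : ZMod (2 * (m - 1))), ?_⟩
  have hft : (f t - t).val = d := by rw [h1]
  rw [imove_eval_lo f t (d - 2) (by omega) (by rw [hft]; omega)]
  rw [hft, show d - 1 - (d - 2) = 1 by omega]
  rw [show ((1 : ℕ) : ZMod (2 * m)) = 1 by norm_num]
  rw [h2]
  have hsv : (s + 1 - t).val = d + 1 := by
    rw [show s + 1 - t = (s - t) + 1 by ring]
    rw [ZMod.val_add_of_lt]
    · rw [val_one' (by omega)]
    · rw [val_one' (by omega)]; omega
  rw [proj_eval_hi _ _ _ (by rw [hsv, hft]; omega)]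
  rw [hsv, cast_add_one (d - 2), show d + 1 - 2 = d - 2 + 1 by omega]

end Eval

/-- If a chord diagram contains a coherent bigon, then its reductivity is at most 2
(Lemma 2.2). -/
theorem coherentBigon_reductivity_le_two {n : ℕ} (hn : 1 ≤ n)
    (f : ZMod (2 * n) → ZMod (2 * n)) (hinv : Function.Involutive f)
    (hfree : ∀ a, f a ≠ a) (i j : ZMod (2 * n)) (hb : CoherentBigon f i j) :
    ReductivityLe 2 f := by
  obtain ⟨hf1, hf2, hcard⟩ := hb
  haveI : NeZero (2 * n) := ⟨by omega⟩
  -- basic distinctness and size facts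
  have hpair : ∀ a b : ZMod (2 * n), ({a, b} : Finset (ZMod (2 * n))).card ≤ 2 :=
    fun a b => (Finset.card_insert_le _ _).trans (by simp)
  have htriple : ∀ a b c : ZMod (2 * n), ({a, b, c} : Finset (ZMod (2 * n))).card ≤ 3 :=
    fun a b c => (Finset.card_insert_le _ _).trans (by
      have := hpair b c; omega)
  have hN4 : 4 ≤ 2 * n := by
    have h4 := Finset.card_le_univ ({i, j, i + 1, j + 1} : Finset (ZMod (2 * n)))
    rw [hcard, ZMod.card] at h4
    exact h4
  have hne_ij : i ≠ j := by
    intro h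
    rw [h] at hcard
    have hsub : ({j, j, j + 1, j + 1} : Finset (ZMod (2 * n))) ⊆ {j, j + 1} := by
      intro x hx; simp at hx ⊢; tauto
    have := (Finset.card_le_card hsub).trans (hpair j (j + 1))
    omega
  have hne_ij1 : i ≠ j + 1 := by
    intro h
    rw [h] at hcard
    have hsub : ({j + 1, j, j + 1 + 1, j + 1} : Finset (ZMod (2 * n))) ⊆ {j, j + 1, j + 1 + 1} := by
      intro x hx; simp at hx ⊢; tauto
    have := (Finset.card_le_card hsub).trans (htriple _ _ _)
    omega
  have hne_i1j : i + 1 ≠ j := by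
    intro h
    rw [← h] at hcard
    have hsub : ({i, i + 1, i + 1, i + 1 + 1} : Finset (ZMod (2 * n))) ⊆ {i, i + 1, i + 1 + 1} := by
      intro x hx; simp at hx ⊢; tauto
    have := (Finset.card_le_card hsub).trans (htriple _ _ _)
    omega
  set D := (j + 1 - i).val with hDdef
  have hDlt : D < 2 * n := ZMod.val_lt _
  have hDpt : i + ((D : ℕ) : ZMod (2 * n)) = j + 1 := add_cast_offset i (j + 1)
  have hD3 : 3 ≤ D := by
    by_contra hlt
    push_neg at hlt
    have hcases : D = 0 ∨ D = 1 ∨ D = 2 := by omega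
    rcases hcases with h | h | h <;> rw [h] at hDpt
    · push_cast at hDpt
      rw [add_zero] at hDpt
      exact hne_ij1 hDpt
    · push_cast at hDpt
      exact hne_ij (add_right_cancel hDpt)
    · push_cast at hDpt
      have : i + 1 + 1 = j + 1 := by rw [← hDpt]; ring
      exact hne_i1j (add_right_cancel this)
  have hval_i : (i - i).val = 0 := by simp
  have hval_i1 : (i + 1 - i).val = 1 := by
    rw [show i + 1 - i = 1 by ring, val_one' (by omega)]
  have hval_j : (j - i).val = D - 1 := by
    rw [show j - i = (j + 1 - i) - 1 by ring, val_sub_le, val_one' (by omega)]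
    rw [val_one' (by omega)]; omega
  -- arc characterizations
  have harc1 : ∀ y : ZMod (2 * n), InArc (i + 1) j y ↔
      (2 ≤ (y - i).val ∧ (y - i).val ≤ D - 2) := by
    intro y
    have hy := ZMod.val_lt (y - i)
    unfold InArc
    rw [sub_val_formula i y (i + 1), sub_val_formula i j (i + 1), hval_i1, hval_j]
    split_ifs <;> omega
  have harc2 : ∀ y : ZMod (2 * n), InArc (j + 1) i y ↔ D + 1 ≤ (y - i).val := by
    intro y
    have hy := ZMod.val_lt (y - i)
    unfold InArc
    rw [sub_val_formula i y (j + 1), sub_val_formula i i (j + 1), hval_i]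
    split_ifs <;> omega
  -- involution corollaries
  have hfj : f j = i + 1 := by rw [← hf2]; exact hinv _
  have hfj1 : f (j + 1) = i := by rw [← hf1]; exact hinv _
  have hptinj : ∀ x y : ZMod (2 * n), (x - i).val = (y - i).val → x = y := by
    intro x y h
    have h2 := eq_of_val_eq h
    have : x - i + i = y - i + i := by rw [h2]
    simpa using this
  -- the complement of the four bigon points is f-stable
  have hcompl : ∀ x : ZMod (2 * n), (x - i).val ≠ 0 → (x - i).val ≠ 1 →
      (x - i).val ≠ D - 1 → (x - i).val ≠ D →
      (f x - i).val ≠ 0 ∧ (f x - i).val ≠ 1 ∧ (f x - i).val ≠ D - 1 ∧ (f x - i).val ≠ D := by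
    intro x h0 h1 hD1 hDD
    refine ⟨?_, ?_, ?_, ?_⟩
    · intro h
      have hfx : f x = i := hptinj _ _ (by rw [h, hval_i])
      have : x = j + 1 := by rw [← hinv x, hfx, hf1]
      exact hDD (by rw [this])
    · intro h
      have hfx : f x = i + 1 := hptinj _ _ (by rw [h, hval_i1])
      have : x = j := by rw [← hinv x, hfx, hf2]
      exact hD1 (by rw [this, hval_j])
    · intro h
      have hfx : f x = j := hptinj _ _ (by rw [h, hval_j])
      have : x = i + 1 := by rw [← hinv x, hfx, hfj]
      exact h1 (by rw [this, hval_i1])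
    · intro h
      have hfx : f x = j + 1 := hptinj _ _ (by rw [h])
      have : x = i := by rw [← hinv x, hfx, hfj1]
      exact h0 (by rw [this, hval_i])
  by_cases hcase : ∃ p, InArc (i + 1) j p ∧ InArc (j + 1) i (f p)
  · -- Case 1: some chord crosses both bigon chords
    obtain ⟨p, hp1, hp2⟩ := hcase
    have hs := (harc1 p).1 hp1
    have ht := (harc2 (f p)).1 hp2
    have htlt := ZMod.val_lt (f p - i)
    haveI : NeZero (2 * (n - 1)) := ⟨by omega⟩
    set s := (p - i).val with hsdef
    set t := (f p - i).val with htdef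
    -- offsets of the relevant points relative to p
    have h_j1p : (j + 1 - p).val = D - s := by
      rw [sub_val_formula i (j + 1) p]; split_ifs <;> omega
    have h_jp : (j - p).val = D - 1 - s := by
      rw [sub_val_formula i j p, hval_j]; split_ifs <;> omega
    have h_ip : (i - p).val = 2 * n - s := by
      rw [sub_val_formula i i p, hval_i]; split_ifs <;> omega
    have h_i1p : (i + 1 - p).val = 2 * n + 1 - s := by
      rw [sub_val_formula i (i + 1) p, hval_i1]; split_ifs <;> omega
    have h_qp : (f p - p).val = t - s := by
      rw [sub_val_formula i (f p) p]; split_ifs <;> omega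
    -- evaluate the moved diagram at the positions of i and i+1
    have hpt_i : p + ((2 * n - s - 2 + 2 : ℕ) : ZMod (2 * n)) = i := by
      rw [show 2 * n - s - 2 + 2 = 2 * n - s by omega, ← h_ip]; exact add_cast_offset p i
    have hpt_i1 : p + ((2 * n - s - 1 + 2 : ℕ) : ZMod (2 * n)) = i + 1 := by
      rw [show 2 * n - s - 1 + 2 = 2 * n + 1 - s by omega, ← h_i1p]
      exact add_cast_offset p (i + 1)
    have hgT0 := imove_eval_hi f p (2 * n - s - 2) (by omega) (by rw [h_qp]; omega)
    rw [hpt_i, hf1, proj_eval_lo _ _ _ (by rw [h_j1p, h_qp]; omega), h_qp, h_j1p] at hgT0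
    have hgT1 := imove_eval_hi f p (2 * n - s - 1) (by omega) (by rw [h_qp]; omega)
    rw [hpt_i1, hf2, proj_eval_lo _ _ _ (by rw [h_jp, h_qp]; omega), h_qp, h_jp] at hgT1
    -- the two bigon chords have become an incoherent bigon; apply the two lemmas
    have hTv : ((((2 * n - s - 2 : ℕ)) : ZMod (2 * (n - 1)))).val = 2 * n - s - 2 :=
      ZMod.val_cast_of_lt (by omega)
    have hSv : ((((t - s - 1 - (D - s) : ℕ)) : ZMod (2 * (n - 1)))).val = t - s - 1 - (D - s) :=
      ZMod.val_cast_of_lt (by omega)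
    have hSTval : ((((t - s - 1 - (D - s) : ℕ)) : ZMod (2 * (n - 1))) -
        (((2 * n - s - 2 : ℕ)) : ZMod (2 * (n - 1)))).val =
        2 * (n - 1) + (t - s - 1 - (D - s)) - (2 * n - s - 2) := by
      rw [val_sub_lt (by rw [hTv, hSv]; omega), hTv, hSv]
    have hTadd : (((2 * n - s - 2 : ℕ)) : ZMod (2 * (n - 1))) + 1 =
        (((2 * n - s - 1 : ℕ)) : ZMod (2 * (n - 1))) := by
      rw [cast_add_one]; congr 1; omega
    have hmono := imove_incoherent (m := n - 1) (by omega) (IMove f p) _ _ hgT0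
      (by rw [hTadd, hgT1, cast_add_one]; congr 1; omega)
      (by rw [hSTval]; omega) (by rw [hSTval]; omega)
    obtain ⟨aa, haa⟩ := hmono
    have hred := reducible_of_monogon (K := 2 * (n - 1 - 1)) (by omega) _ aa haa
    show Reducible f ∨ ∃ a : ZMod (2 * n), ReductivityLe 1 (IMove f a)
    exact Or.inr ⟨p, Or.inr ⟨((2 * n - s - 2 : ℕ) : ZMod (2 * (n - 1))), hred⟩⟩
  · -- Case 2: no chord crosses both bigon chords; one I-move at i suffices
    push_neg at hcase
    haveI : NeZero (2 * (n - 1)) := ⟨by omega⟩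
    have hstab : ∀ x : ZMod (2 * n), 2 ≤ (x - i).val → (x - i).val ≤ D - 2 →
        2 ≤ (f x - i).val ∧ (f x - i).val ≤ D - 2 := by
      intro x h2 hD2
      have hc := hcompl x (by omega) (by omega) (by omega) (by omega)
      have hnot : ¬ (D + 1 ≤ (f x - i).val) := by
        intro hge
        exact hcase x ((harc1 x).2 ⟨h2, hD2⟩) ((harc2 (f x)).2 hge)
      have := ZMod.val_lt (f x - i)
      omega
    have hstab2 : ∀ x : ZMod (2 * n), D + 1 ≤ (x - i).val → D + 1 ≤ (f x - i).val := by
      intro x hge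
      have hxlt := ZMod.val_lt (x - i)
      have hflt := ZMod.val_lt (f x - i)
      have hc := hcompl x (by omega) (by omega) (by omega) (by omega)
      by_contra hlt
      push_neg at hlt
      have h3 := (hstab (f x) (by omega) (by omega)).2
      rw [hinv x] at h3
      omega
    have hfi : (f i - i).val = D := by rw [hf1]
    have ha0lt : D - 2 < 2 * (n - 1) := by omega
    have hg0 : IMove f i ((D - 2 : ℕ) : ZMod (2 * (n - 1))) = 0 := by
      rw [imove_eval_lo f i (D - 2) ha0lt (by rw [hfi]; omega), hfi,
        show D - 1 - (D - 2) = 1 by omega, show ((1 : ℕ) : ZMod (2 * n)) = 1 by norm_num, hf2,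
        proj_eval_lo _ _ _ (by rw [hval_j, hfi]; omega), hfi, hval_j,
        show D - 1 - (D - 1) = 0 by omega]
      norm_num
    have ha0v : (((D - 2 : ℕ) : ZMod (2 * (n - 1)))).val = D - 2 := ZMod.val_cast_of_lt ha0lt
    have harcg : ∀ x : ZMod (2 * (n - 1)),
        InArc ((D - 2 : ℕ) : ZMod (2 * (n - 1))) 0 x ↔ D - 1 ≤ x.val := by
      intro x
      have hx := ZMod.val_lt x
      unfold InArc
      have h00 : ((0 : ZMod (2 * (n - 1))) - ((D - 2 : ℕ) : ZMod (2 * (n - 1)))).val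
          = 2 * (n - 1) + 0 - (D - 2) := by
        rw [val_sub_lt (by rw [ha0v, ZMod.val_zero]; omega), ZMod.val_zero, ha0v]
      rw [h00]
      rcases le_or_gt (((D - 2 : ℕ) : ZMod (2 * (n - 1)))).val x.val with h | h
      · rw [val_sub_le h, ha0v]; omega
      · rw [val_sub_lt h, ha0v]; omega
    show Reducible f ∨ ∃ a : ZMod (2 * n), ReductivityLe 1 (IMove f a)
    refine Or.inr ⟨i, Or.inl ⟨((D - 2 : ℕ) : ZMod (2 * (n - 1))), fun c hcr => ?_⟩⟩
    obtain ⟨-, -, -, -, hx⟩ := hcr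
    rw [hg0] at hx
    have hvlt := ZMod.val_lt c
    have hc_cast : ((c.val : ℕ) : ZMod (2 * (n - 1))) = c := cast_val_self c
    suffices hiff : InArc ((D - 2 : ℕ) : ZMod (2 * (n - 1))) 0 c ↔
        InArc ((D - 2 : ℕ) : ZMod (2 * (n - 1))) 0 (IMove f i c) by
      rcases hx with ⟨h1, h2⟩ | ⟨h1, h2⟩
      · exact h2 (hiff.1 h1)
      · exact h2 (hiff.2 h1)
    rw [harcg c, harcg (IMove f i c)]
    by_cases hA : c.val + 1 < D
    · rcases Nat.eq_zero_or_pos c.val with hv0 | hvpos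
      · -- c.val = 0 : point j, image i+1, position D-2
        have hgc0 := imove_eval_lo f i c.val (by omega) (by rw [hfi]; omega)
        rw [hc_cast, hfi, hv0] at hgc0
        rw [show D - 1 - 0 = D - 1 by omega, ← hval_j, add_cast_offset, hfj,
          proj_eval_lo _ _ _ (by rw [hval_i1, hfi]; omega), hfi, hval_i1] at hgc0
        rw [hgc0, ZMod.val_cast_of_lt (by omega)]
        omega
      · rcases eq_or_lt_of_le (show c.val + 1 ≤ D - 1 by omega) with hvD | hvD
        · -- c.val = D - 2 : c is the witness point itself, image 0
          have hceq : c = ((D - 2 : ℕ) : ZMod (2 * (n - 1))) := by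
            rw [← hc_cast]; congr 1; omega
          rw [hceq, hg0, ZMod.val_zero, ha0v]; omega
        · -- 1 ≤ c.val ≤ D - 3 : stays on the bigon side
          have hgc0 := imove_eval_lo f i c.val (by omega) (by rw [hfi]; omega)
          rw [hc_cast, hfi] at hgc0
          have hoff : ((i + ((D - 1 - c.val : ℕ) : ZMod (2 * n))) - i).val = D - 1 - c.val := by
            rw [add_sub_cancel_left, ZMod.val_cast_of_lt (by omega)]
          have hst := hstab _ (by rw [hoff]; omega) (by rw [hoff]; omega)
          rw [proj_eval_lo _ _ _ (by rw [hfi]; omega), hfi] at hgc0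
          rw [hgc0, ZMod.val_cast_of_lt (by omega)]
          omega
    · -- c.val ≥ D - 1 : stays on the far side
      have hgc0 := imove_eval_hi f i c.val (by omega) (by rw [hfi]; omega)
      rw [hc_cast] at hgc0
      have hoff : ((i + ((c.val + 2 : ℕ) : ZMod (2 * n))) - i).val = c.val + 2 := by
        rw [add_sub_cancel_left, ZMod.val_cast_of_lt (by omega)]
      have hst := hstab2 _ (by rw [hoff]; omega)
      have hup := ZMod.val_lt (f (i + ((c.val + 2 : ℕ) : ZMod (2 * n))) - i)
      rw [proj_eval_hi _ _ _ (by rw [hfi]; omega)] at hgc0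
      rw [hgc0, ZMod.val_cast_of_lt (by omega)]
      omega


end SphericalCurveReductivity
end

section
/- If a chord diagram is not reducible and contains a coherent bigon, then there exists a chord p such that the I-move at p produces a chord diagram containing an incoherent bigon. (Step in the proof of the paper's Lemma 2.2.) -/
/-!
Chord diagrams modeling spherical curves (Gauss diagrams).

A chord diagram with `n` chords is a fixed-point-free involution `f` on the
cyclically ordered set `ZMod (2*n)`; the unordered pairs `{a, f a}` are its chords.
-/

namespace SphericalCurveReductivity

lemma card4aux {α : Type*} [DecidableEq α] {a b c d : α}
    (h : ({a, b, c, d} : Finset α).card = 4) :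
    a ≠ b ∧ a ≠ c ∧ a ≠ d ∧ b ≠ c ∧ b ≠ d ∧ c ≠ d := by
  have hle : ∀ (x y z : α), ({x, y, z} : Finset α).card ≤ 3 := by
    intro x y z
    calc ({x, y, z} : Finset α).card ≤ ({y, z} : Finset α).card + 1 :=
          Finset.card_insert_le _ _
      _ ≤ (({z} : Finset α).card + 1) + 1 := by
          have := Finset.card_insert_le y ({z} : Finset α); omega
      _ ≤ 3 := by simp
  refine ⟨?_, ?_, ?_, ?_, ?_, ?_⟩ <;> rintro rfl
  · have hsub : ({a, a, c, d} : Finset α) ⊆ {a, c, d} := by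
      intro x hx; simp at hx ⊢; tauto
    have := (Finset.card_le_card hsub).trans (hle a c d); omega
  · have hsub : ({a, b, a, d} : Finset α) ⊆ {a, b, d} := by
      intro x hx; simp at hx ⊢; tauto
    have := (Finset.card_le_card hsub).trans (hle a b d); omega
  · have hsub : ({a, b, c, a} : Finset α) ⊆ {a, b, c} := by
      intro x hx; simp at hx ⊢; tauto
    have := (Finset.card_le_card hsub).trans (hle a b c); omega
  · have hsub : ({a, b, b, d} : Finset α) ⊆ {a, b, d} := by
      intro x hx; simp at hx ⊢; tauto
    have := (Finset.card_le_card hsub).trans (hle a b d); omega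
  · have hsub : ({a, b, c, b} : Finset α) ⊆ {a, b, c} := by
      intro x hx; simp at hx ⊢; tauto
    have := (Finset.card_le_card hsub).trans (hle a b c); omega
  · have hsub : ({a, b, c, c} : Finset α) ⊆ {a, b, c} := by
      intro x hx; simp at hx ⊢; tauto
    have := (Finset.card_le_card hsub).trans (hle a b c); omega

lemma card4of {α : Type*} [DecidableEq α] {a b c d : α}
    (h1 : a ≠ b) (h2 : a ≠ c) (h3 : a ≠ d) (h4 : b ≠ c) (h5 : b ≠ d) (h6 : c ≠ d) :
    ({a, b, c, d} : Finset α).card = 4 := by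
  rw [Finset.card_insert_of_notMem (by simp [h1, h2, h3]),
      Finset.card_insert_of_notMem (by simp [h4, h5]),
      Finset.card_insert_of_notMem (by simp [h6])]
  simp

lemma sub_val_of_reps {N : ℕ} [NeZero N] (b : ZMod N) (m₁ m₂ : ℕ) (h₂ : m₂ ≤ m₁)
    (h : m₁ - m₂ < N) : ((b + (m₁ : ZMod N)) - (b + (m₂ : ZMod N))).val = m₁ - m₂ := by
  have he : (b + (m₁ : ZMod N)) - (b + (m₂ : ZMod N)) = ((m₁ - m₂ : ℕ) : ZMod N) := by
    rw [Nat.cast_sub h₂]; ring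
  rw [he, ZMod.val_natCast, Nat.mod_eq_of_lt h]

lemma sub_val0 {N : ℕ} [NeZero N] (b : ZMod N) (m : ℕ) (h : m < N) :
    ((b + (m : ZMod N)) - b).val = m := by
  have := sub_val_of_reps b m 0 (Nat.zero_le _) (by omega)
  simpa using this

lemma rep_of_val {N : ℕ} [NeZero N] (b x : ZMod N) :
    x = b + (((x - b).val : ℕ) : ZMod N) := by
  rw [ZMod.natCast_zmod_val]; ring

lemma cast_ne_cast {N : ℕ} [NeZero N] {m₁ m₂ : ℕ} (h1 : m₁ < N) (h2 : m₂ < N)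
    (h : m₁ ≠ m₂) : ((m₁ : ℕ) : ZMod N) ≠ ((m₂ : ℕ) : ZMod N) := by
  intro he
  have := congrArg ZMod.val he
  rw [ZMod.val_natCast, ZMod.val_natCast, Nat.mod_eq_of_lt h1, Nat.mod_eq_of_lt h2] at this
  exact h this

lemma cast_add_one_s3 {N : ℕ} (m₁ m₂ : ℕ) (h : m₁ + 1 = m₂) :
    ((m₁ : ℕ) : ZMod N) + 1 = ((m₂ : ℕ) : ZMod N) := by
  rw [← h]; push_cast; ring

/-- If a chord diagram is not reducible and contains a coherent bigon, then there exists
a chord `p` such that the I-move at `p` produces a chord diagram containing an incoherent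
bigon (step in the proof of Lemma 2.2). -/
theorem coherentBigon_not_reducible_imove_incoherentBigon {n : ℕ} (hn : 1 ≤ n)
    (f : ZMod (2 * n) → ZMod (2 * n)) (hinv : Function.Involutive f)
    (hfree : ∀ a, f a ≠ a) (hnr : ¬ Reducible f)
    (i j : ZMod (2 * n)) (hb : CoherentBigon f i j) :
    ∃ p : ZMod (2 * n), ∃ i' j' : ZMod (2 * (n - 1)),
      IncoherentBigon (IMove f p) i' j' := by
  classical
  haveI : NeZero (2 * n) := ⟨by omega⟩
  obtain ⟨hfi, hfi1, hcard⟩ := hb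
  obtain ⟨hij, hii1, hij1, hji1, hjj1, hi1j1⟩ := card4aux hcard
  simp only [Reducible, not_exists, not_forall, not_not] at hnr
  obtain ⟨c₀, hcr⟩ := hnr (i + 1)
  rw [Crosses, hfi1] at hcr
  obtain ⟨h1, h2, h3, h4, hxor⟩ := hcr
  obtain ⟨c, hc2, hc4, hc5, hc6⟩ :
      ∃ c, c ≠ j ∧ f c ≠ j ∧ InArc (i + 1) j c ∧ ¬ InArc (i + 1) j (f c) := by
    rcases hxor with ⟨h5, h6⟩ | ⟨h5, h6⟩
    · exact ⟨c₀, h2, h4, h5, h6⟩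
    · exact ⟨f c₀, h4, by rw [hinv c₀]; exact h2, h5, by rw [hinv c₀]; exact h6⟩
  have hc3 : f c ≠ i + 1 := by
    intro h
    have : c = f (i + 1) := by rw [← h, hinv c]
    rw [hfi1] at this
    exact hc2 this
  set D := (j - i).val with hD
  set t := (c - (i + 1)).val with ht
  set s := (f c - (i + 1)).val with hs
  have hDlt : D < 2 * n := ZMod.val_lt _
  have htlt : t < 2 * n := ZMod.val_lt _
  have hslt : s < 2 * n := ZMod.val_lt _
  have hD1 : D ≠ 0 := by
    intro h
    exact hij (sub_eq_zero.mp ((ZMod.val_eq_zero _).mp h)).symm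
  have hjrep : j = (i + 1) + ((D - 1 : ℕ) : ZMod (2 * n)) := by
    have h0 : j = i + ((D : ℕ) : ZMod (2 * n)) := rep_of_val i j
    rw [h0]
    have h1' : ((D : ℕ) : ZMod (2 * n)) = ((D - 1 : ℕ) : ZMod (2 * n)) + 1 :=
      (cast_add_one_s3 _ _ (by omega)).symm
    rw [h1']; ring
  have hj1rep : j + 1 = (i + 1) + ((D : ℕ) : ZMod (2 * n)) := by
    rw [hjrep, add_assoc, cast_add_one_s3 (D - 1) D (by omega)]
  have hirep : i = (i + 1) + ((2 * n - 1 : ℕ) : ZMod (2 * n)) := by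
    have h0 : ((2 * n - 1 : ℕ) : ZMod (2 * n)) = -1 := by
      rw [Nat.cast_sub (by omega), ZMod.natCast_self, Nat.cast_one]; ring
    rw [h0]; ring
  have hcrep : c = (i + 1) + ((t : ℕ) : ZMod (2 * n)) := rep_of_val (i + 1) c
  have hfcrep : f c = (i + 1) + ((s : ℕ) : ZMod (2 * n)) := rep_of_val (i + 1) (f c)
  have hjv : (j - (i + 1)).val = D - 1 := by
    rw [hjrep]; exact sub_val0 (i + 1) (D - 1) (by omega)
  have hiv : (i - (i + 1)).val = 2 * n - 1 := by
    have h0 : i - (i + 1) = ((2 * n - 1 : ℕ) : ZMod (2 * n)) := by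
      rw [Nat.cast_sub (by omega), ZMod.natCast_self, Nat.cast_one]; ring
    rw [h0, ZMod.val_natCast, Nat.mod_eq_of_lt (by omega)]
  obtain ⟨ht1, ht2⟩ := hc5
  rw [← ht] at ht1
  rw [← ht, hjv] at ht2
  have hs0 : s ≠ 0 := by
    intro h
    exact hc3 (sub_eq_zero.mp ((ZMod.val_eq_zero _).mp h))
  have hsD1 : s ≠ D - 1 := by
    intro h
    exact hc4 (by rw [hfcrep, h, ← hjrep])
  have hsge : D - 1 ≤ s := by
    simp only [InArc, hjv, not_and, not_lt] at hc6
    rw [← hs] at hc6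
    exact hc6 (Nat.pos_of_ne_zero hs0)
  have hsD : s ≠ D := by
    intro h
    have hfc : f c = j + 1 := by rw [hfcrep, h, ← hj1rep]
    have hci : c = i := by
      have h0 := hinv c
      rw [hfc, ← hfi, hinv i] at h0
      exact h0.symm
    have h1' : t = 2 * n - 1 := by
      rw [ht, hci]; exact hiv
    omega
  have hsN1 : s ≠ 2 * n - 1 := by
    intro h
    have hfc : f c = i := by rw [hfcrep, h, ← hirep]
    have hcj : c = j + 1 := by
      have h0 := hinv c
      rw [hfc, hfi] at h0
      exact h0.symm
    have h1' : t = D := by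
      rw [ht, hcj, hj1rep]; exact sub_val0 (i + 1) D hDlt
    omega
  -- summary: 1 ≤ t, t ≤ D - 2, D + 1 ≤ s, s ≤ 2 * n - 2, 3 ≤ D, 6 ≤ 2 * n
  haveI hMnz : NeZero (2 * (n - 1)) := ⟨by omega⟩
  have hM : 2 * (n - 1) = 2 * n - 2 := by omega
  have he : (f c - c).val = s - t := by
    rw [hfcrep, hcrep]; exact sub_val_of_reps (i + 1) s t (by omega) (by omega)
  refine ⟨c, ((2 * n - t - 3 : ℕ) : ZMod (2 * (n - 1))), ((s - D - 1 : ℕ) : ZMod (2 * (n - 1))),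
    ?_, ?_, ?_⟩
  · -- IMove f c i' = j'
    simp only [IMove, imoveEmb]
    have hval : (((2 * n - t - 3 : ℕ) : ZMod (2 * (n - 1)))).val = 2 * n - t - 3 := by
      rw [ZMod.val_natCast, Nat.mod_eq_of_lt (by omega)]
    rw [hval, he, if_neg (by omega)]
    have hemb : c + ((2 * n - t - 3 + 2 : ℕ) : ZMod (2 * n)) = i := by
      rw [hcrep]
      conv_lhs => rw [add_assoc, add_assoc]
      have h0 : (1 : ZMod (2 * n)) + (((t : ℕ) : ZMod (2 * n)) +
          ((2 * n - t - 3 + 2 : ℕ) : ZMod (2 * n))) = 0 := by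
        rw [← Nat.cast_add, ← Nat.cast_one, ← Nat.cast_add,
          show 1 + (t + (2 * n - t - 3 + 2)) = 2 * n by omega, ZMod.natCast_self (2 * n)]
      rw [h0, add_zero]
    rw [hemb, hfi]
    simp only [imoveProj]
    have hv : (j + 1 - c).val = D - t := by
      rw [hj1rep, hcrep]; exact sub_val_of_reps (i + 1) D t (by omega) (by omega)
    rw [hv, he, if_pos (by omega)]
    congr 1
    omega
  · -- IMove f c (i' + 1) = j' + 1
    simp only [IMove, imoveEmb]
    rw [cast_add_one_s3 (2 * n - t - 3) (2 * n - t - 2) (by omega)]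
    have hval : (((2 * n - t - 2 : ℕ) : ZMod (2 * (n - 1)))).val = 2 * n - t - 2 := by
      rw [ZMod.val_natCast, Nat.mod_eq_of_lt (by omega)]
    rw [hval, he, if_neg (by omega)]
    have hemb : c + ((2 * n - t - 2 + 2 : ℕ) : ZMod (2 * n)) = (i + 1) := by
      rw [hcrep, add_assoc]
      have h0 : ((t : ℕ) : ZMod (2 * n)) + ((2 * n - t - 2 + 2 : ℕ) : ZMod (2 * n)) = 0 := by
        rw [← Nat.cast_add, show t + (2 * n - t - 2 + 2) = 2 * n by omega, ZMod.natCast_self (2*n)]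
      rw [h0, add_zero]
    rw [hemb, hfi1]
    simp only [imoveProj]
    have hv : (j - c).val = D - 1 - t := by
      rw [hjrep, hcrep]; exact sub_val_of_reps (i + 1) (D - 1) t (by omega) (by omega)
    rw [hv, he, if_pos (by omega)]
    rw [cast_add_one_s3 (s - D - 1) (s - D) (by omega)]
    congr 1
    omega
  · -- card = 4
    rw [cast_add_one_s3 (2 * n - t - 3) (2 * n - t - 2) (by omega),
        cast_add_one_s3 (s - D - 1) (s - D) (by omega)]
    exact card4of (cast_ne_cast (by omega) (by omega) (by omega))
      (cast_ne_cast (by omega) (by omega) (by omega))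
      (cast_ne_cast (by omega) (by omega) (by omega))
      (cast_ne_cast (by omega) (by omega) (by omega))
      (cast_ne_cast (by omega) (by omega) (by omega))
      (cast_ne_cast (by omega) (by omega) (by omega))


end SphericalCurveReductivity
end

section
/- If a chord diagram contains a bigon (coherent or incoherent), then its reductivity is at most 2. -/
/-!
Chord diagrams modeling spherical curves (Gauss diagrams).

A chord diagram with `n` chords is a fixed-point-free involution `f` on the
cyclically ordered set `ZMod (2*n)`; the unordered pairs `{a, f a}` are its chords.
-/

namespace SphericalCurveReductivity

section Helpers

variable {N : ℕ} [NeZero N]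

lemma natCast_val_eq (w : ZMod N) : ((w.val : ℕ) : ZMod N) = w :=
  ZMod.natCast_rightInverse w

lemma cast_pred_eq_neg_one : ((N - 1 : ℕ) : ZMod N) = -1 := by
  have h1 : (1:ℕ) ≤ N := Nat.one_le_iff_ne_zero.mpr (NeZero.ne N)
  rw [Nat.cast_sub h1, ZMod.natCast_self, Nat.cast_one, zero_sub]

lemma val_neg_one' : (-1 : ZMod N).val = N - 1 := by
  rw [← cast_pred_eq_neg_one, ZMod.val_cast_of_lt]
  have h1 : (1:ℕ) ≤ N := Nat.one_le_iff_ne_zero.mpr (NeZero.ne N)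
  omega

lemma eq_neg_one_of_val {w : ZMod N} (h : w.val = N - 1) : w = -1 := by
  rw [← natCast_val_eq w, h, cast_pred_eq_neg_one]

lemma val_add_one' {w : ZMod N} (h : w ≠ -1) : (w + 1).val = w.val + 1 := by
  have hlt : w.val < N := ZMod.val_lt w
  have hne : w.val ≠ N - 1 := fun hh => h (eq_neg_one_of_val hh)
  have h2 : w.val + 1 < N := by omega
  calc (w + 1).val = (((w.val + 1 : ℕ)) : ZMod N).val := by
        rw [Nat.cast_add, Nat.cast_one, natCast_val_eq]
    _ = w.val + 1 := ZMod.val_cast_of_lt h2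

lemma val_sub_one' {w : ZMod N} (h : w ≠ 0) : w.val = (w - 1).val + 1 := by
  have hne : w - 1 ≠ -1 := by
    intro hh
    apply h
    have := congrArg (· + 1) hh
    simpa using this
  have := val_add_one' hne
  rwa [sub_add_cancel] at this

lemma val_sub_of_lt' {u v : ZMod N} (h : u.val < v.val) :
    (u - v).val = u.val + N - v.val := by
  have hv : v.val < N := ZMod.val_lt v
  have hlt : u.val + N - v.val < N := by omega
  have hc : ((u.val + N - v.val : ℕ) : ZMod N) = u - v := by
    rw [Nat.cast_sub (by omega), Nat.cast_add, natCast_val_eq, natCast_val_eq,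
      ZMod.natCast_self, add_zero]
  rw [← hc, ZMod.val_cast_of_lt hlt]

lemma val_neg'' {w : ZMod N} (h : w ≠ 0) : (-w).val = N - w.val := by
  have h0 : (0 : ZMod N).val = 0 := ZMod.val_zero
  have hpos : 0 < w.val := ZMod.val_pos.mpr h
  have := val_sub_of_lt' (u := 0) (v := w) (by omega)
  rwa [zero_sub, h0, zero_add] at this

lemma card3_le {α : Type*} [DecidableEq α] (a b c : α) :
    ({a, b, c} : Finset α).card ≤ 3 := by
  apply (Finset.card_insert_le _ _).trans
  have := Finset.card_insert_le b ({c} : Finset α)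
  simp only [Finset.card_singleton] at this
  omega

lemma four_ne {α : Type*} [DecidableEq α] {a b c d : α}
    (h : ({a, b, c, d} : Finset α).card = 4) : b ≠ a ∧ d ≠ a := by
  constructor
  · intro heq
    rw [heq, Finset.insert_idem] at h
    have := card3_le a c d
    omega
  · intro heq
    have hsub : ({a, b, c, d} : Finset α) ⊆ {a, b, c} := by
      intro x hx
      simp only [Finset.mem_insert, Finset.mem_singleton] at hx ⊢
      rcases hx with h1 | h1 | h1 | h1
      · tauto
      · tauto
      · tauto
      · rw [h1, heq]; tauto
    have := (Finset.card_le_card hsub).trans (card3_le a b c)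
    omega

end Helpers

/-- A chord with adjacent endpoints crosses nothing. -/
lemma reducible_of_adjacent {M : ℕ} {g : ZMod M → ZMod M} {a : ZMod M}
    (h : g a = a + 1) : Reducible g := by
  refine ⟨a, fun c hc => ?_⟩
  obtain ⟨-, -, -, -, hxor⟩ := hc
  rw [h] at hxor
  have h1 : a + 1 - a = 1 := by ring
  have hv : (1 : ZMod M).val ≤ 1 := by
    rw [ZMod.val_one_eq_one_mod]; exact Nat.mod_le 1 M
  rcases hxor with ⟨⟨hp, hq⟩, -⟩ | ⟨⟨hp, hq⟩, -⟩ <;> rw [h1] at hq <;> omega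

/-- I-move at the chord `{i+1, j+1}` of an incoherent bigon creates a monogon. -/
lemma incoherent_step {m : ℕ} (hm : 2 ≤ m) (f : ZMod (2 * m) → ZMod (2 * m))
    (i j : ZMod (2 * m)) (h0 : f i = j) (h1 : f (i + 1) = j + 1)
    (hji : j ≠ i) (hj1i : j + 1 ≠ i) :
    Reducible (IMove f (i + 1)) := by
  haveI : NeZero (2 * m) := ⟨by omega⟩
  have hd0 : 0 < (j - i).val := ZMod.val_pos.mpr (sub_ne_zero.mpr hji)
  have hdN : (j - i).val < 2 * m := ZMod.val_lt _
  have hdne : j - i ≠ -1 := by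
    intro hh
    apply hj1i
    have h2 : j + 1 - i = 0 := by
      rw [show j + 1 - i = (j - i) + 1 by ring, hh]; ring
    exact sub_eq_zero.mp h2
  have hdle : (j - i).val ≤ 2 * m - 2 := by
    have : (j - i).val ≠ 2 * m - 1 := fun hh => hdne (eq_neg_one_of_val hh)
    omega
  have hm1 : (-1 : ZMod (2 * (m - 1))).val = 2 * (m - 1) - 1 := by
    haveI : NeZero (2 * (m - 1)) := ⟨by omega⟩
    exact val_neg_one'
  have e1 : imoveEmb m (i + 1) (j + 1) (-1) = i := by
    rw [imoveEmb, if_neg, hm1]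
    · have h3 : (2 * (m - 1) - 1 + 2 : ℕ) = 2 * m - 1 := by omega
      rw [h3, cast_pred_eq_neg_one]
      ring
    · rw [hm1]
      rw [show j + 1 - (i + 1) = j - i by ring]
      omega
  have e2 : imoveProj m (i + 1) (j + 1) j = 0 := by
    have hval : (j - (i + 1)).val = (j - i).val - 1 := by
      rw [show j - (i + 1) = j - i - 1 by ring]
      have := val_sub_one' (sub_ne_zero.mpr hji)
      omega
    rw [imoveProj, show j + 1 - (i + 1) = j - i by ring, hval, if_pos (by omega)]
    rw [show ((j - i).val - 1 - ((j - i).val - 1) : ℕ) = 0 by omega, Nat.cast_zero]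
  apply reducible_of_adjacent (a := (-1 : ZMod (2 * (m - 1))))
  rw [IMove, h1, e1, h0, e2, neg_add_cancel]


lemma cast_succ_eq {M : ℕ} (t : ℕ) : ((t : ℕ) : ZMod M) + 1 = ((t + 1 : ℕ) : ZMod M) := by
  push_cast; ring

/-- I-move at a chord crossing the chord `{i+1, j}` of a coherent bigon produces an
incoherent bigon (the move reverses the arc containing `i, i+1` but not `j, j+1`). -/
lemma coherent_step {n : ℕ} (hn : 1 ≤ n) (f : ZMod (2 * n) → ZMod (2 * n))
    (hinv : Function.Involutive f) (i j y : ZMod (2 * n))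
    (h0 : f i = j + 1) (h1 : f (i + 1) = j) (hji : j ≠ i)
    (hy1 : y ≠ i + 1) (hy2 : y ≠ j) (hy3 : f y ≠ i + 1) (hy4 : f y ≠ j)
    (hxin : InArc (i + 1) j (f y)) (hynin : ¬ InArc (i + 1) j y) :
    3 ≤ n ∧ ∃ i' j' : ZMod (2 * (n - 1)),
      IMove f y i' = j' ∧ IMove f y (i' + 1) = j' + 1 ∧ j' ≠ i' ∧ j' + 1 ≠ i' := by
  haveI : NeZero (2 * n) := ⟨by omega⟩
  obtain ⟨X, hX⟩ : ∃ t, (f y - (i + 1)).val = t := ⟨_, rfl⟩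
  obtain ⟨A, hA⟩ : ∃ t, (j - (i + 1)).val = t := ⟨_, rfl⟩
  obtain ⟨Y, hY⟩ : ∃ t, (y - (i + 1)).val = t := ⟨_, rfl⟩
  simp only [InArc, hX, hA, hY] at hxin hynin
  obtain ⟨hX0, hXA⟩ := hxin
  have hAlt : A < 2 * n := hA ▸ ZMod.val_lt _
  have hji' : j - (i + 1) ≠ -1 := by
    intro hh
    apply hji
    have h2 : j - i = 0 := by
      rw [show j - i = (j - (i + 1)) + 1 by ring, hh]; ring
    exact sub_eq_zero.mp h2
  have hAle : A ≤ 2 * n - 2 := by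
    have : (j - (i + 1)).val ≠ 2 * n - 1 := fun hh => hji' (eq_neg_one_of_val hh)
    omega
  have hY0 : 0 < Y := hY ▸ ZMod.val_pos.mpr (sub_ne_zero.mpr hy1)
  have hYA : A < Y := by
    have hne : Y ≠ A := by
      intro hh
      apply hy2
      have := ZMod.val_injective (2 * n) (hY.trans (hh.trans hA.symm))
      exact sub_left_inj.mp this
    omega
  have hyi : y ≠ i := by
    intro hh
    have hfy : f y = j + 1 := by rw [hh, h0]
    have : X = A + 1 := by
      rw [← hX, hfy, show j + 1 - (i + 1) = (j - (i + 1)) + 1 by ring,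
        val_add_one' hji', hA]
    omega
  have hYle : Y ≤ 2 * n - 2 := by
    have h2 : y - (i + 1) ≠ -1 := by
      intro hh
      apply hyi
      have h3 : y - i = 0 := by
        rw [show y - i = (y - (i + 1)) + 1 by ring, hh]; ring
      exact sub_eq_zero.mp h3
    have h4 : (y - (i + 1)).val ≠ 2 * n - 1 := fun hh => h2 (eq_neg_one_of_val hh)
    have h5 : (y - (i + 1)).val < 2 * n := ZMod.val_lt _
    omega
  have hyj1 : y ≠ j + 1 := by
    intro hh
    have hfy : f y = i := by rw [hh, ← h0, hinv i]
    have : X = 2 * n - 1 := by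
      rw [← hX, hfy, show i - (i + 1) = -1 by ring, val_neg_one']
    omega
  have hYA1 : Y ≠ A + 1 := by
    intro hh
    apply hyj1
    have hv : (j + 1 - (i + 1)).val = A + 1 := by
      rw [show j + 1 - (i + 1) = (j - (i + 1)) + 1 by ring, val_add_one' hji', hA]
    have := ZMod.val_injective (2 * n) (hY.trans (hh.trans hv.symm))
    exact sub_left_inj.mp this
  have hAY2 : A + 2 ≤ Y := by omega
  have h3n : 3 ≤ n := by omega
  -- positions of the relevant points relative to `y`
  have hp1 : (i + 1 - y).val = 2 * n - Y := by
    rw [show i + 1 - y = -(y - (i + 1)) by ring, val_neg'' (sub_ne_zero.mpr hy1), hY]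
  have hp0 : (i - y).val = 2 * n - Y - 1 := by
    have h5 := val_sub_one' (w := i + 1 - y) (sub_ne_zero.mpr fun hh => hy1 hh.symm)
    rw [show i + 1 - y - 1 = i - y by ring] at h5
    omega
  have hD : (f y - y).val = X + 2 * n - Y := by
    have h5 := val_sub_of_lt' (u := f y - (i + 1)) (v := y - (i + 1))
      (by rw [hX, hY]; omega)
    rw [show f y - (i + 1) - (y - (i + 1)) = f y - y by ring, hX, hY] at h5
    exact h5
  have hq : (j - y).val = A + 2 * n - Y := by
    have h5 := val_sub_of_lt' (u := j - (i + 1)) (v := y - (i + 1))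
      (by rw [hA, hY]; omega)
    rw [show j - (i + 1) - (y - (i + 1)) = j - y by ring, hA, hY] at h5
    exact h5
  have hjy : j - y ≠ -1 := by
    intro hh
    apply hyj1
    have h7 : j + 1 - y = 0 := by
      rw [show j + 1 - y = (j - y) + 1 by ring, hh]; ring
    exact (sub_eq_zero.mp h7).symm
  have hq1 : (j + 1 - y).val = A + 2 * n - Y + 1 := by
    rw [show j + 1 - y = (j - y) + 1 by ring, val_add_one' hjy, hq]
  haveI : NeZero (2 * (n - 1)) := ⟨by omega⟩
  refine ⟨h3n, ((X - 1 : ℕ) : ZMod (2 * (n - 1))),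
    ((A + 2 * n - Y - 2 : ℕ) : ZMod (2 * (n - 1))), ?_, ?_, ?_, ?_⟩
  · -- IMove f y (X-1) = (A + 2n - Y - 2)
    have he1 : imoveEmb n y (f y) ((X - 1 : ℕ) : ZMod (2 * (n - 1))) = i + 1 := by
      simp only [imoveEmb, ZMod.val_cast_of_lt (show X - 1 < 2 * (n - 1) by omega), hD]
      rw [if_pos (by omega)]
      rw [show (X + 2 * n - Y - 1 - (X - 1) : ℕ) = 2 * n - Y by omega]
      rw [show ((2 * n - Y : ℕ) : ZMod (2 * n)) = i + 1 - y from by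
        rw [← hp1, natCast_val_eq]]
      ring
    have he2 : imoveProj n y (f y) j = ((A + 2 * n - Y - 2 : ℕ) : ZMod (2 * (n - 1))) := by
      simp only [imoveProj, hq, hD]
      rw [if_neg (by omega)]
    rw [IMove, he1, h1, he2]
  · -- IMove f y (X-1+1) = (A + 2n - Y - 2) + 1
    have hci1 : ((X - 1 : ℕ) : ZMod (2 * (n - 1))) + 1 = ((X : ℕ) : ZMod (2 * (n - 1))) :=
      (cast_succ_eq (X - 1)).trans (congrArg _ (by omega))
    have hcj1 : ((A + 2 * n - Y - 2 : ℕ) : ZMod (2 * (n - 1))) + 1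
        = ((A + 2 * n - Y - 1 : ℕ) : ZMod (2 * (n - 1))) :=
      (cast_succ_eq (A + 2 * n - Y - 2)).trans (congrArg _ (by omega))
    have he3 : imoveEmb n y (f y) ((X : ℕ) : ZMod (2 * (n - 1))) = i := by
      simp only [imoveEmb, ZMod.val_cast_of_lt (show X < 2 * (n - 1) by omega), hD]
      rw [if_pos (by omega)]
      rw [show (X + 2 * n - Y - 1 - X : ℕ) = 2 * n - Y - 1 by omega]
      rw [show ((2 * n - Y - 1 : ℕ) : ZMod (2 * n)) = i - y from by
        rw [← hp0, natCast_val_eq]]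
      ring
    have he4 : imoveProj n y (f y) (j + 1)
        = ((A + 2 * n - Y - 1 : ℕ) : ZMod (2 * (n - 1))) := by
      simp only [imoveProj, hq1, hD]
      rw [if_neg (by omega)]
      exact congrArg _ (by omega)
    rw [hci1, hcj1, IMove, he3, h0, he4]
  · intro hh
    have := congrArg ZMod.val hh
    rw [ZMod.val_cast_of_lt (show A + 2 * n - Y - 2 < 2 * (n - 1) by omega),
      ZMod.val_cast_of_lt (show X - 1 < 2 * (n - 1) by omega)] at this
    omega
  · intro hh
    rw [show ((A + 2 * n - Y - 2 : ℕ) : ZMod (2 * (n - 1))) + 1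
        = ((A + 2 * n - Y - 1 : ℕ) : ZMod (2 * (n - 1))) from
      (cast_succ_eq (A + 2 * n - Y - 2)).trans (congrArg _ (by omega))] at hh
    have := congrArg ZMod.val hh
    rw [ZMod.val_cast_of_lt (show A + 2 * n - Y - 1 < 2 * (n - 1) by omega),
      ZMod.val_cast_of_lt (show X - 1 < 2 * (n - 1) by omega)] at this
    omega

/-- If a chord diagram contains a bigon (coherent or incoherent), then its reductivity is
at most 2. -/
theorem bigon_reductivity_le_two {n : ℕ} (hn : 1 ≤ n)
    (f : ZMod (2 * n) → ZMod (2 * n)) (hinv : Function.Involutive f)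
    (hfree : ∀ a, f a ≠ a) (i j : ZMod (2 * n))
    (hb : IncoherentBigon f i j ∨ CoherentBigon f i j) :
    ReductivityLe 2 f := by
  haveI : NeZero (2 * n) := ⟨by omega⟩
  show Reducible f ∨ ∃ a : ZMod (2 * n), ReductivityLe 1 (IMove f a)
  simp only [IncoherentBigon, CoherentBigon] at hb
  rcases hb with ⟨h0, h1, hcard⟩ | ⟨h0, h1, hcard⟩
  · -- incoherent bigon: one I-move creates a monogon
    obtain ⟨hji, hj1i⟩ := four_ne hcard
    have hn2 : 2 ≤ n := by
      have h4 := Finset.card_le_univ ({i, j, i + 1, j + 1} : Finset (ZMod (2 * n)))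
      rw [hcard, ZMod.card] at h4
      omega
    exact Or.inr ⟨i + 1, Or.inl (incoherent_step hn2 f i j h0 h1 hji hj1i)⟩
  · -- coherent bigon
    obtain ⟨hji, -⟩ := four_ne hcard
    by_cases hred : ∀ c, ¬ Crosses f (i + 1) c
    · exact Or.inl ⟨i + 1, hred⟩
    · push_neg at hred
      obtain ⟨c, hc⟩ := hred
      simp only [Crosses, h1] at hc
      obtain ⟨hc1, hc2, hc3, hc4, hxor⟩ := hc
      rcases hxor with ⟨hin, hnin⟩ | ⟨hin, hnin⟩
      · -- `c` lies in the arc: use `y = f c`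
        obtain ⟨h3n, i', j', g1, g2, ne1, ne2⟩ :=
          coherent_step hn f hinv i j (f c) h0 h1 hji hc3 hc4
            (by rw [hinv c]; exact hc1) (by rw [hinv c]; exact hc2)
            (by rw [hinv c]; exact hin) hnin
        exact Or.inr ⟨f c, Or.inr ⟨i' + 1,
          incoherent_step (m := n - 1) (by omega) _ i' j' g1 g2 ne1 ne2⟩⟩
      · -- `f c` lies in the arc: use `y = c`
        obtain ⟨h3n, i', j', g1, g2, ne1, ne2⟩ :=
          coherent_step hn f hinv i j c h0 h1 hji hc1 hc2 hc3 hc4 hin hnin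
        exact Or.inr ⟨c, Or.inr ⟨i' + 1,
          incoherent_step (m := n - 1) (by omega) _ i' j' g1 g2 ne1 ne2⟩⟩

end SphericalCurveReductivity
end

section
/- If a chord diagram contains a trigon of type A, then its reductivity is at most 2. (Paper's Lemma 2.3: if a spherical curve P has a trigon of type A, then r(P) ≤ 2.) -/
/-!
Chord diagrams modeling spherical curves (Gauss diagrams).

A chord diagram with `n` chords is a fixed-point-free involution `f` on the
cyclically ordered set `ZMod (2*n)`; the unordered pairs `{a, f a}` are its chords.
-/

namespace SphericalCurveReductivity

/-!
With the corners of a trigon listed in cyclic order, its three chords form one of eight matchings,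
and a corner's two chords cross exactly when its first point is joined to the next corner.
A type-A trigon therefore has, up to rotation, corners `x, y, z` in this order with chords
`{x, z}`, `{x + 1, y + 1}`, `{y, z + 1}`. The I-move at `{x, z}` reverses the arc from `x` to
`z`, which makes `{x + 1, y + 1}` and `{y, z + 1}` an incoherent bigon; an I-move at one chord
of an incoherent bigon leaves the other one joining two adjacent points, so it crosses nothing.
-/

section Offsets

variable {N : ℕ}

theorem val_sub_eq_zero {a b : ZMod N} : (a - b).val = 0 ↔ a = b := by
  rw [ZMod.val_eq_zero, sub_eq_zero]

theorem val_add_one_sub_of_lt {o x : ZMod N} (h : (x - o).val + 1 < N) :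
    (x + 1 - o).val = (x - o).val + 1 := by
  have : Fact (1 < N) := ⟨by omega⟩
  rw [add_sub_right_comm, ZMod.val_add_of_lt (by rwa [ZMod.val_one]), ZMod.val_one]

variable [NeZero N]

theorem val_sub_add_val_sub (o u w : ZMod N) :
    (u - w).val + (w - o).val = (u - o).val ∨ (u - w).val + (w - o).val = (u - o).val + N := by
  rw [← sub_add_sub_cancel u w o]
  rcases lt_or_ge ((u - w).val + (w - o).val) N with h | h
  · exact Or.inl (ZMod.val_add_of_lt h).symm
  · exact Or.inr (ZMod.val_add_val_of_le h)

theorem val_sub_inj (o : ZMod N) {a b : ZMod N} : (a - o).val = (b - o).val ↔ a = b :=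
  (ZMod.val_injective N).eq_iff.trans sub_left_inj

theorem val_add_one_sub {o x : ZMod N} (h : x + 1 ≠ o) : (x + 1 - o).val = (x - o).val + 1 := by
  apply val_add_one_sub_of_lt
  by_contra hge
  have hN : (x - o).val + 1 = N := by have := ZMod.val_lt (x - o); omega
  apply h
  rw [← sub_eq_zero, add_sub_right_comm, ← ZMod.natCast_zmod_val (x - o), ← Nat.cast_add_one, hN,
    ZMod.natCast_self]

section Sbtw

attribute [local instance] LT.toSBtw

theorem inArc_iff_sbtw (o : ZMod N) {a b x : ZMod N} :
    InArc a b x ↔ sbtw (a - o).val (x - o).val (b - o).val := by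
  have := val_sub_add_val_sub o x a; have := val_sub_add_val_sub o b a
  have := ZMod.val_lt (x - a); have := ZMod.val_lt (b - a)
  have := ZMod.val_lt (a - o); have := ZMod.val_lt (x - o); have := ZMod.val_lt (b - o)
  rw [InArc, sbtw_iff]
  omega

theorem crosses_iff_sbtw (o : ZMod N) {f : ZMod N → ZMod N} {a c : ZMod N} :
    Crosses f a c ↔ (c - o).val ≠ (a - o).val ∧ (c - o).val ≠ (f a - o).val ∧
      (f c - o).val ≠ (a - o).val ∧ (f c - o).val ≠ (f a - o).val ∧
      Xor (sbtw (a - o).val (c - o).val (f a - o).val)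
        (sbtw (a - o).val (f c - o).val (f a - o).val) := by
  simp only [Crosses, inArc_iff_sbtw o, ne_eq, val_sub_inj]
  rfl

end Sbtw

end Offsets

theorem crosses_apply_right {N : ℕ} {f : ZMod N → ZMod N} (hinv : Function.Involutive f)
    (a c : ZMod N) : Crosses f a (f c) ↔ Crosses f a c := by
  unfold Crosses
  rw [hinv c]
  constructor <;> rintro ⟨h1, h2, h3, h4, h5⟩ <;> exact ⟨h3, h4, h1, h2, (xor_comm _ _).mp h5⟩

theorem not_inArc_add_one {N : ℕ} (c x : ZMod N) : ¬ InArc c (c + 1) x := by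
  rintro ⟨hpos, hlt⟩
  rw [add_sub_cancel_left, ZMod.val_one_eq_one_mod] at hlt
  have := Nat.mod_le 1 N
  omega

theorem reducible_of_apply_eq_add_one {N : ℕ} {g : ZMod N → ZMod N} {c : ZMod N}
    (h : g c = c + 1) : Reducible g :=
  ⟨c, fun d hd => by
    rcases hd.2.2.2.2 with ⟨hin, -⟩ | ⟨hin, -⟩ <;> rw [h] at hin <;>
      exact not_inArc_add_one _ _ hin⟩

section IMove

variable {n : ℕ} [NeZero n] {a b x : ZMod (2 * n)}

theorem imoveProj_val_of_lt (hxa : x ≠ a) (h : (x - a).val < (b - a).val) :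
    (imoveProj n a b x).val = (b - a).val - 1 - (x - a).val := by
  have hx0 : (x - a).val ≠ 0 := fun h0 => hxa (val_sub_eq_zero.mp h0)
  have := ZMod.val_lt (b - a)
  rw [imoveProj, if_pos h, ZMod.val_cast_of_lt (by omega)]

theorem imoveProj_val_of_gt (hab : a ≠ b) (h : (b - a).val < (x - a).val) :
    (imoveProj n a b x).val = (x - a).val - 2 := by
  have hb0 : (b - a).val ≠ 0 := fun h0 => hab (val_sub_eq_zero.mp h0).symm
  have := ZMod.val_lt (x - a)
  rw [imoveProj, if_neg (by omega), ZMod.val_cast_of_lt (by omega)]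

theorem imoveEmb_imoveProj (hab : a ≠ b) (hxa : x ≠ a) (hxb : x ≠ b) :
    imoveEmb n a b (imoveProj n a b x) = x := by
  have hx : a + (((x - a).val : ℕ) : ZMod (2 * n)) = x := by
    rw [ZMod.natCast_zmod_val]; ring
  have hx0 : (x - a).val ≠ 0 := fun h0 => hxa (val_sub_eq_zero.mp h0)
  have hb0 : (b - a).val ≠ 0 := fun h0 => hab (val_sub_eq_zero.mp h0).symm
  rcases Nat.lt_or_gt_of_ne fun h => hxb ((val_sub_inj a).mp h) with h | h
  · rw [imoveEmb, imoveProj_val_of_lt hxa h, if_pos (by omega)]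
    convert hx using 3; omega
  · rw [imoveEmb, imoveProj_val_of_gt hab h, if_neg (by omega)]
    convert hx using 3; omega

theorem iMove_imoveProj {f : ZMod (2 * n) → ZMod (2 * n)} (hfa : f a ≠ a) (hxa : x ≠ a)
    (hxfa : x ≠ f a) : IMove f a (imoveProj n a (f a) x) = imoveProj n a (f a) (f x) := by
  rw [IMove, imoveEmb_imoveProj hfa.symm hxa hxfa]

end IMove

theorem nodup_of_card_toFinset {α : Type*} [DecidableEq α] {l : List α}
    (h : l.toFinset.card = l.length) : l.Nodup :=
  Multiset.toFinset_card_eq_card_iff_nodup.mp h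

theorem card_natCast_eq_four {M a b c d : ℕ} (h : [a, b, c, d].Nodup) (ha : a < M) (hb : b < M)
    (hc : c < M) (hd : d < M) :
    ({(a : ZMod M), (b : ZMod M), (c : ZMod M), (d : ZMod M)} : Finset (ZMod M)).card = 4 := by
  have hnd : [(a : ZMod M), (b : ZMod M), (c : ZMod M), (d : ZMod M)].Nodup :=
    List.Nodup.of_map ZMod.val <| by
      rwa [List.map, List.map, List.map, List.map, List.map, ZMod.val_cast_of_lt ha,
        ZMod.val_cast_of_lt hb, ZMod.val_cast_of_lt hc, ZMod.val_cast_of_lt hd]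
  simpa using List.toFinset_card_of_nodup hnd

theorem reducible_iMove_of_incoherentBigon {m : ℕ} [NeZero m] {g : ZMod (2 * m) → ZMod (2 * m)}
    {a b : ZMod (2 * m)} (h : IncoherentBigon g a b) : Reducible (IMove g a) := by
  obtain ⟨hga, hga1, hcard⟩ := h
  have hnd := nodup_of_card_toFinset (l := [a, b, a + 1, b + 1]) (by simpa using hcard)
  simp only [List.nodup_cons, List.mem_cons, List.not_mem_nil, or_false, not_or] at hnd
  obtain ⟨⟨hab, haa1, hab1⟩, ⟨hba1, -⟩, -, -⟩ := hnd
  have : Fact (1 < 2 * m) := ⟨by have := NeZero.pos m; omega⟩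
  have ha1 : (a + 1 - a).val = 1 := by rw [add_sub_cancel_left, ZMod.val_one]
  have hb1 : (b + 1 - a).val = (b - a).val + 1 := val_add_one_sub (Ne.symm hab1)
  have hd0 : (b - a).val ≠ 0 := fun h0 => hab (val_sub_eq_zero.mp h0).symm
  have hd1 : (b - a).val ≠ 1 := fun h1 => hba1 ((val_sub_inj a).mp (h1.trans ha1.symm))
  have hproj : imoveProj m a b (b + 1) = imoveProj m a b (a + 1) + 1 := by
    rw [imoveProj, imoveProj, hb1, ha1, if_neg (by omega), if_pos (by omega), ← Nat.cast_succ]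
    congr 1; omega
  apply reducible_of_apply_eq_add_one (c := imoveProj m a b (a + 1))
  rw [← hga, iMove_imoveProj (by rwa [hga, ne_comm]) (Ne.symm haa1) (by rwa [hga, ne_comm]), hga1,
    hga, hproj]

section Core

variable {n : ℕ} {f : ZMod (2 * n) → ZMod (2 * n)} {x y z : ZMod (2 * n)}

theorem incoherentBigon_iMove (hinv : Function.Involutive f) (hx : f x = z)
    (hx1 : f (x + 1) = y + 1) (hy : f y = z + 1) (hxy : 2 ≤ (y - x).val)
    (hyz : (y - x).val + 2 ≤ (z - x).val) (hzx : (z - x).val + 2 ≤ 2 * n) :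
    IncoherentBigon (IMove f x) (imoveProj n x z (y + 1)) (imoveProj n x z (x + 1)) := by
  have : NeZero n := ⟨by omega⟩
  have : Fact (1 < 2 * n) := ⟨by omega⟩
  have vx1 : (x + 1 - x).val = 1 := by rw [add_sub_cancel_left, ZMod.val_one]
  have vy1 : (y + 1 - x).val = (y - x).val + 1 := val_add_one_sub_of_lt (by omega)
  have vz1 : (z + 1 - x).val = (z - x).val + 1 := val_add_one_sub_of_lt (by omega)
  have hne : ∀ {u v : ZMod (2 * n)}, (u - x).val ≠ (v - x).val → u ≠ v :=
    fun h huv => h (huv ▸ rfl)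
  have hfx : f x ≠ x := by rw [hx]; exact hne (by rw [sub_self, ZMod.val_zero]; omega)
  have pY1 : imoveProj n x z (y + 1) = (((z - x).val - 1 - ((y - x).val + 1) : ℕ) : ZMod _) := by
    rw [imoveProj, vy1, if_pos (by omega)]
  have pY : imoveProj n x z y = (((z - x).val - 1 - (y - x).val : ℕ) : ZMod _) := by
    rw [imoveProj, if_pos (by omega)]
  have pX1 : imoveProj n x z (x + 1) = (((z - x).val - 1 - 1 : ℕ) : ZMod _) := by
    rw [imoveProj, vx1, if_pos (by omega)]
  have pZ1 : imoveProj n x z (z + 1) = (((z - x).val + 1 - 2 : ℕ) : ZMod _) := by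
    rw [imoveProj, vz1, if_neg (by omega)]
  have hY : imoveProj n x z (y + 1) + 1 = imoveProj n x z y := by
    rw [pY1, pY, ← Nat.cast_succ]; congr 1; omega
  have hX : imoveProj n x z (x + 1) + 1 = imoveProj n x z (z + 1) := by
    rw [pX1, pZ1, ← Nat.cast_succ]; congr 1; omega
  refine ⟨?_, ?_, ?_⟩
  · rw [← hx, iMove_imoveProj hfx (hne (by rw [vy1, sub_self, ZMod.val_zero]; omega))
      (hne (by rw [vy1, hx]; omega)), hinv.eq_iff.mpr hx1.symm]
  · rw [hY, hX, ← hx, iMove_imoveProj hfx (hne (by rw [sub_self, ZMod.val_zero]; omega))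
      (hne (by rw [hx]; omega)), hy, hx]
  · rw [hY, hX, pY1, pX1, pY, pZ1]
    exact card_natCast_eq_four (by simp only [List.nodup_cons, List.mem_cons, List.not_mem_nil,
      List.nodup_nil, or_false, not_or, not_false_eq_true, and_true]; omega)
      (by omega) (by omega) (by omega) (by omega)

theorem reductivityLe_two_of_trigonA_normalForm (hinv : Function.Involutive f) (hx : f x = z)
    (hx1 : f (x + 1) = y + 1) (hy : f y = z + 1) (hxy : 2 ≤ (y - x).val)
    (hyz : (y - x).val + 2 ≤ (z - x).val) (hzx : (z - x).val + 2 ≤ 2 * n) :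
    ReductivityLe 2 f := by
  have : NeZero (n - 1) := ⟨by omega⟩
  exact .inr ⟨x, .inr ⟨_, reducible_iMove_of_incoherentBigon
    (incoherentBigon_iMove hinv hx hx1 hy hxy hyz hzx)⟩⟩

end Core

theorem triangle_matching_cases {α : Type*} {f : α → α} (hinv : Function.Involutive f)
    (hfree : ∀ x, f x ≠ x) {i i' j j' k k' : α} (hnd : [i, i', j, j', k, k'].Nodup)
    (hmaps : ∀ x ∈ [i, i', j, j', k, k'], f x ∈ [i, i', j, j', k, k'])
    (hi : f i ≠ i') (hj : f j ≠ j') (hk : f k ≠ k') :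
    (f i = j ∧ f i' = k ∧ f j' = k') ∨ (f i = j ∧ f i' = k' ∧ f j' = k) ∨
    (f i = j' ∧ f i' = k ∧ f j = k') ∨ (f i = j' ∧ f i' = k' ∧ f j = k) ∨
    (f i = k ∧ f i' = j ∧ f j' = k') ∨ (f i = k ∧ f i' = j' ∧ f j = k') ∨
    (f i = k' ∧ f i' = j ∧ f j' = k) ∨ (f i = k' ∧ f i' = j' ∧ f j = k) := by
  simp only [List.forall_mem_cons] at hmaps
  simp only [List.nodup_cons, List.mem_cons, List.not_mem_nil, or_false, not_or] at hnd hmaps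
  have hff : ∀ x, f (f x) = x := hinv
  obtain ⟨hfi, hfi', hmaps⟩ := hmaps
  rcases hfi with h | h | h | h | h | h <;> rcases hfi' with h' | h' | h' | h' | h' | h' <;> grind

section Trigon

variable {N : ℕ} {f : ZMod N → ZMod N} {i j k : ZMod N}

theorem Trigon.nodup (h : Trigon f i j k) : [i, i + 1, j, j + 1, k, k + 1].Nodup :=
  nodup_of_card_toFinset (by simpa [trigonSet] using h.1)

theorem Trigon.cases (hinv : Function.Involutive f) (hfree : ∀ x, f x ≠ x) (h : Trigon f i j k) :
    (f i = j ∧ f (i + 1) = k ∧ f (j + 1) = k + 1) ∨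
    (f i = j ∧ f (i + 1) = k + 1 ∧ f (j + 1) = k) ∨
    (f i = j + 1 ∧ f (i + 1) = k ∧ f j = k + 1) ∨
    (f i = j + 1 ∧ f (i + 1) = k + 1 ∧ f j = k) ∨
    (f i = k ∧ f (i + 1) = j ∧ f (j + 1) = k + 1) ∨
    (f i = k ∧ f (i + 1) = j + 1 ∧ f j = k + 1) ∨
    (f i = k + 1 ∧ f (i + 1) = j ∧ f (j + 1) = k) ∨
    (f i = k + 1 ∧ f (i + 1) = j + 1 ∧ f j = k) :=
  triangle_matching_cases hinv hfree h.nodup (by simpa [trigonSet] using h.2.1) h.2.2.1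
    h.2.2.2.1 h.2.2.2.2

theorem Trigon.swap (h : Trigon f i j k) : Trigon f i k j := by
  obtain ⟨hcard, hmaps, hi, hj, hk⟩ := h
  have hset : trigonSet i k j = trigonSet i j k := by
    ext; simp only [trigonSet, Finset.mem_insert, Finset.mem_singleton]; tauto
  exact ⟨hset ▸ hcard, hset ▸ hmaps, hi, hk, hj⟩

theorem Trigon.apply_trigonThird (hinv : Function.Involutive f) (hfree : ∀ x, f x ≠ x)
    (h : Trigon f i j k) : f (trigonThird f i j) = trigonThird f i k := by
  have hnd := h.nodup
  simp only [List.nodup_cons, List.mem_cons, List.not_mem_nil, or_false, not_or] at hnd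
  rcases h.cases hinv hfree with ⟨h1, h2, h3⟩ | ⟨h1, h2, h3⟩ | ⟨h1, h2, h3⟩ | ⟨h1, h2, h3⟩ |
    ⟨h1, h2, h3⟩ | ⟨h1, h2, h3⟩ | ⟨h1, h2, h3⟩ | ⟨h1, h2, h3⟩ <;> grind [trigonThird]

theorem TrigonA.swap (hinv : Function.Involutive f) (hfree : ∀ x, f x ≠ x)
    (h : TrigonA f i j k) : TrigonA f i k j := by
  obtain ⟨ht, hA⟩ := h
  refine ⟨ht.swap, ?_⟩
  rwa [← ht.apply_trigonThird hinv hfree, crosses_apply_right hinv, crosses_apply_right hinv]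

theorem Trigon.val_sub_of_le [NeZero N] (ht : Trigon f i j k) (hjk : (j - i).val ≤ (k - i).val) :
    (i + 1 - i).val = 1 ∧ (j + 1 - i).val = (j - i).val + 1 ∧
      (k + 1 - i).val = (k - i).val + 1 ∧ 2 ≤ (j - i).val ∧ (j - i).val + 2 ≤ (k - i).val ∧
      (k - i).val + 2 ≤ N := by
  have hnd := ht.nodup
  simp only [List.nodup_cons, List.mem_cons, List.not_mem_nil, or_false, not_or] at hnd
  obtain ⟨⟨hi1, hij, hij1, -, hik1⟩, ⟨hi1j, -⟩, ⟨-, hjk', -⟩, ⟨hj1k, -⟩, -⟩ := hnd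
  have vi1 : (i + 1 - i).val = 1 := by rw [val_add_one_sub (Ne.symm hi1), sub_self, ZMod.val_zero]
  have vj1 : (j + 1 - i).val = (j - i).val + 1 := val_add_one_sub (Ne.symm hij1)
  have vk1 : (k + 1 - i).val = (k - i).val + 1 := val_add_one_sub (Ne.symm hik1)
  have hj0 : (j - i).val ≠ 0 := fun h => hij (val_sub_eq_zero.mp h).symm
  have hj1 : (j - i).val ≠ 1 := fun h => hi1j ((val_sub_inj i).mp (vi1.trans h.symm))
  have hk : (j - i).val ≠ (k - i).val := fun h => hjk' ((val_sub_inj i).mp h)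
  have hk1 : (j + 1 - i).val ≠ (k - i).val := fun h => hj1k ((val_sub_inj i).mp h)
  have := ZMod.val_lt (k + 1 - i)
  refine ⟨vi1, vj1, vk1, ?_, ?_, ?_⟩ <;> omega

attribute [local instance] LT.toSBtw in
theorem reductivityLe_two_of_trigonA_of_le {n : ℕ} [NeZero n] {f : ZMod (2 * n) → ZMod (2 * n)}
    {i j k : ZMod (2 * n)} (hinv : Function.Involutive f) (hfree : ∀ x, f x ≠ x)
    (ht : TrigonA f i j k) (hjk : (j - i).val ≤ (k - i).val) : ReductivityLe 2 f := by
  obtain ⟨ht, hA⟩ := ht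
  obtain ⟨vi1, vj1, vk1, hJ, hJK, hK⟩ := ht.val_sub_of_le hjk
  have vi : (i - i).val = 0 := by rw [sub_self, ZMod.val_zero]
  have hoff (u w : ZMod (2 * n)) := val_sub_add_val_sub i u w
  have hlt (u : ZMod (2 * n)) := ZMod.val_lt u
  simp only [ExactlyTwo, crosses_iff_sbtw i, sbtw_iff, Xor, vi, vi1] at hA
  -- The first, fourth and sixth matchings are the normal form rooted at `j`, `k` and `i`;
  -- in the other five, `hA` fails.
  rcases ht.cases hinv hfree with ⟨h1, h2, h3⟩ | ⟨h1, h2, h3⟩ | ⟨h1, h2, h3⟩ | ⟨h1, h2, h3⟩ |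
    ⟨h1, h2, h3⟩ | ⟨h1, h2, h3⟩ | ⟨h1, h2, h3⟩ | ⟨h1, h2, h3⟩
  · have := hoff k j; have := hoff i j; have := hlt (k - j); have := hlt (i - j)
    exact reductivityLe_two_of_trigonA_normalForm hinv (hinv.eq_iff.mpr h1.symm) h3
      (hinv.eq_iff.mpr h2.symm) (by omega) (by omega) (by omega)
  · rw [trigonThird, if_pos (Or.inl h1.symm)] at hA
    simp only [h1, h2, h3, vj1, vk1] at hA
    omega
  · rw [trigonThird, if_neg (by rw [h1, h2, ← val_sub_inj i, ← val_sub_inj i, vj1]; omega)] at hA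
    simp only [h1, h2, h3, vj1, vk1] at hA
    omega
  · have := hoff i k; have := hoff j k; have := hlt (i - k); have := hlt (j - k)
    exact reductivityLe_two_of_trigonA_normalForm hinv (hinv.eq_iff.mpr h3.symm)
      (hinv.eq_iff.mpr h2.symm) h1 (by omega) (by omega) (by omega)
  · rw [trigonThird, if_pos (Or.inr h2.symm)] at hA
    simp only [h1, h2, h3, vj1, vk1] at hA
    omega
  · exact reductivityLe_two_of_trigonA_normalForm hinv h1 h2 h3 (by omega) (by omega) (by omega)
  · rw [trigonThird, if_pos (Or.inr h2.symm)] at hA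
    simp only [h1, h2, h3, vj1, vk1] at hA
    omega
  · rw [trigonThird, if_neg (by rw [h1, h2, ← val_sub_inj i, ← val_sub_inj i, vj1, vk1]; omega)]
      at hA
    simp only [h1, h2, h3, vj1, vk1] at hA
    omega

end Trigon

/-- If a chord diagram contains a trigon of type A, then its reductivity is at most 2
(Lemma 2.3). -/
theorem trigonA_reductivity_le_two {n : ℕ} (hn : 1 ≤ n)
    (f : ZMod (2 * n) → ZMod (2 * n)) (hinv : Function.Involutive f)
    (hfree : ∀ a, f a ≠ a) (i j k : ZMod (2 * n)) (ht : TrigonA f i j k) :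
    ReductivityLe 2 f := by
  have : NeZero n := ⟨by omega⟩
  rcases le_total (j - i).val (k - i).val with hjk | hkj
  · exact reductivityLe_two_of_trigonA_of_le hinv hfree ht hjk
  · exact reductivityLe_two_of_trigonA_of_le hinv hfree (ht.swap hinv hfree) hkj

end SphericalCurveReductivity
end
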